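/- arXiv:2009.04253 — 7 statements merged into one kernel-verified Lean document; each statement's English description precedes it below -/
import Mathlib

section
/- In the finite dynamic game model, the private observation histories of the players are conditionally independent given the state of the world and the public action history: for every time t, every state v, every action history a_{1:t-1}, and every observation history x_{1:t} such that ℙ(V = v, A_{1:t-1} = a_{1:t-1}) > 0, one has ℙ(X_{1:t} = x_{1:t} | V = v, A_{1:t-1} = a_{1:t-1}) = ∏_{i=1}^{N} ℙ(X^i_{1:t} = x^i_{1:t} | V = v, A_{1:t-1} = a_{1:t-1}). -/
/-!
Fix `v` and the public actions `a_{1:t-1}`. The joint weight of a history is `QV v` times a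
product over time of an observation factor `∏ i, QX^i` and an action factor `∏ i, g^i`, each a
probability kernel in its newest coordinate given the past. Summing out, from the horizon
backwards, the actions at times `≥ t` and the observations after `t` therefore only produces
constant factors, and what remains, with `a_{1:t-1}` substituted, is a product over players of
weights depending only on each player's own observations up to `t`. So every event
`∀ i, X^i_{1:t} ∈ Sᵢ` has probability `K * ∏ i, mᵢ(Sᵢ)` with `K` independent of the `Sᵢ`, and
conditional independence is the algebra of such products.
-/

open Finset

/-- Finite dynamic game model with `N` players and horizon `T`:
a finite set of states of the world with prior `QV`, per-player finite observation and
action sets, observation kernels `QX i (· | v, a_{t-1})` (with `a0` the dummy initial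
action profile) and behavioral strategies `g i t (· | x^i_{1:t}, a_{1:t-1})` that are
adapted to player `i`'s private history and the public action history. -/
structure GameModel (N T : ℕ) where
  V : Type
  X : Fin N → Type
  A : Fin N → Type
  fV : Fintype V
  fX : ∀ i, Fintype (X i)
  fA : ∀ i, Fintype (A i)
  QV : V → ℝ
  a0 : ∀ i, A i
  QX : ∀ i, X i → V → (∀ j, A j) → ℝ
  g : ∀ i, Fin T → A i → (Fin T → X i) → (Fin T → ∀ j, A j) → ℝ
  QV_nonneg : ∀ v, 0 ≤ QV v
  QV_sum : ∑ v, QV v = 1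
  QX_nonneg : ∀ i x v a, 0 ≤ QX i x v a
  QX_sum : ∀ i v a, ∑ x, QX i x v a = 1
  g_nonneg : ∀ i t ai x a, 0 ≤ g i t ai x a
  g_sum : ∀ i t x a, ∑ ai, g i t ai x a = 1
  g_adapted : ∀ i (t : Fin T) ai x x' a a',
    (∀ s, s ≤ t → x s = x' s) → (∀ s, s < t → a s = a' s) →
    g i t ai x a = g i t ai x' a'

attribute [instance] GameModel.fV GameModel.fX GameModel.fA

variable {N T : ℕ}

/-- A complete history/outcome `(v, x_{1:T}, a_{1:T})`; time `τ ∈ {1,…,T}` is the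
index `τ - 1 : Fin T`. -/
abbrev GameModel.Hist (M : GameModel N T) : Type :=
  M.V × (Fin T → ∀ i, M.X i) × (Fin T → ∀ i, M.A i)

/-- The action profile `a_{t-1}` preceding time `t` (the dummy `a0` for `t = 1`). -/
def GameModel.prevA (M : GameModel N T) (a : Fin T → ∀ i, M.A i) (t : Fin T) :
    ∀ i, M.A i :=
  if (t : ℕ) = 0 then M.a0
  else a ⟨(t : ℕ) - 1, lt_of_le_of_lt (Nat.sub_le _ _) t.isLt⟩

/-- The joint probability mass
`ℙ(v, x_{1:T}, a_{1:T}) = QV v ∏_t ∏_i QX^i(x^i_t|v,a_{t-1}) g^i_t(a^i_t|x^i_{1:t},a_{1:t-1})`. -/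
noncomputable def GameModel.jointP (M : GameModel N T) (ω : M.Hist) : ℝ :=
  M.QV ω.1 *
    ∏ t : Fin T, ∏ i : Fin N,
      M.QX i (ω.2.1 t i) ω.1 (M.prevA ω.2.2 t) *
        M.g i t (ω.2.2 t i) (fun s => ω.2.1 s i) ω.2.2

open Classical in
/-- Probability of an event under the joint distribution. -/
noncomputable def GameModel.Pr (M : GameModel N T) (E : M.Hist → Prop) : ℝ :=
  ∑ ω : M.Hist, if E ω then M.jointP ω else 0

section UpdateSum

variable {ι β R : Type*} [Fintype ι] [DecidableEq ι] [Fintype β]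

theorem Fintype.sum_sum_update [AddCommMonoid R] (k : ι) (h : (ι → β) → R) :
    ∑ z, ∑ c, h (Function.update z k c) = Fintype.card β • ∑ z, h z := by
  let e : Equiv.Perm ((ι → β) × β) :=
    Function.Involutive.toPerm (fun p => (Function.update p.1 k p.2, p.1 k)) fun p => by simp
  rw [← Fintype.sum_prod_type',
    Fintype.sum_equiv e (fun p => h (Function.update p.1 k p.2)) (fun p => h p.1) fun _ => rfl,
    Fintype.sum_prod_type]
  simp [Finset.smul_sum]

theorem Fintype.sum_mul_eq_sum_div_card [Semifield R] [CharZero R] (k : ι)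
    {f F : (ι → β) → R} (hf : ∀ z c, f (Function.update z k c) = f z)
    (hF : ∀ z, ∑ c, F (Function.update z k c) = 1) :
    ∑ z, f z * F z = (∑ z, f z) / Fintype.card β := by
  rcases isEmpty_or_nonempty β with hβ | hβ
  · have : IsEmpty (ι → β) := ⟨fun z => isEmptyElim (z k)⟩
    simp
  rw [eq_div_iff (Nat.cast_ne_zero.2 Fintype.card_ne_zero), mul_comm, ← nsmul_eq_mul,
    ← Fintype.sum_sum_update k]
  refine Finset.sum_congr rfl fun z _ => ?_
  simp only [hf, ← Finset.mul_sum, hF, mul_one]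

theorem Fintype.sum_prod_piComm {κ : Type*} {X : ι → Type*} [Fintype κ] [DecidableEq κ]
    [∀ i, Fintype (X i)] [CommSemiring R] (G : ∀ i, (κ → X i) → R) :
    ∑ x : κ → ∀ i, X i, ∏ i, G i (fun s => x s i) = ∏ i, ∑ y, G i y := by
  rw [Fintype.prod_sum]
  exact Fintype.sum_equiv (Equiv.piComm _) _ _ fun _ => rfl

end UpdateSum

theorem div_eq_prod_div_of_eq_mul_prod {ι 𝕜 : Type*} [Fintype ι] [DecidableEq ι] [Field 𝕜]
    {P Z : 𝕜} {Pm : ι → 𝕜} (K : 𝕜) (f g : ι → 𝕜) (hP : P = K * ∏ i, f i)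
    (hPm : ∀ i, Pm i = K * ∏ j, Function.update g i (f i) j) (hZ : Z = K * ∏ i, g i)
    (hZ0 : Z ≠ 0) :
    P / Z = ∏ i, Pm i / Z := by
  subst hP hZ
  have hK : K ≠ 0 := left_ne_zero_of_mul hZ0
  have hg : ∀ s : Finset ι, ∏ j ∈ s, g j ≠ 0 := fun s =>
    prod_ne_zero_iff.2 fun j _ => prod_ne_zero_iff.1 (right_ne_zero_of_mul hZ0) j (mem_univ j)
  rw [mul_div_mul_left _ _ hK, ← prod_div_distrib]
  refine prod_congr rfl fun i hi => ?_
  rw [hPm, prod_update_of_mem hi, prod_eq_mul_prod_sdiff_singleton_of_mem hi g,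
    mul_div_mul_left _ _ hK, mul_div_mul_right _ _ (hg _)]

namespace GameModel

variable (M : GameModel N T)

noncomputable def obsWeight (v : M.V) (s : Fin T) (x : Fin T → ∀ i, M.X i)
    (b : Fin T → ∀ i, M.A i) : ℝ :=
  ∏ i, M.QX i (x s i) v (M.prevA b s)

noncomputable def actWeight (s : Fin T) (x : Fin T → ∀ i, M.X i)
    (b : Fin T → ∀ i, M.A i) : ℝ :=
  ∏ i, M.g i s (b s i) (fun r => x r i) b

noncomputable def stepWeight (v : M.V) (s : Fin T) (x : Fin T → ∀ i, M.X i)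
    (b : Fin T → ∀ i, M.A i) : ℝ :=
  M.obsWeight v s x b * M.actWeight s x b

theorem jointP_eq (v : M.V) (x : Fin T → ∀ i, M.X i) (b : Fin T → ∀ i, M.A i) :
    M.jointP (v, x, b) = M.QV v * ∏ s, M.stepWeight v s x b := by
  simp only [jointP, stepWeight, obsWeight, actWeight, prod_mul_distrib]

variable {M}

theorem prevA_congr {b b' : Fin T → ∀ i, M.A i} {s : Fin T} (h : ∀ r < s, b r = b' r) :
    M.prevA b s = M.prevA b' s := by
  unfold prevA
  split_ifs with hs
  · rfl
  · exact h _ (Fin.lt_def.2 (by simp only; omega))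

theorem obsWeight_congr {v : M.V} {s : Fin T} {x x' : Fin T → ∀ i, M.X i}
    {b b' : Fin T → ∀ i, M.A i} (hx : x s = x' s) (hb : ∀ r < s, b r = b' r) :
    M.obsWeight v s x b = M.obsWeight v s x' b' := by
  simp only [obsWeight, hx, prevA_congr hb]

theorem actWeight_congr {s : Fin T} {x x' : Fin T → ∀ i, M.X i}
    {b b' : Fin T → ∀ i, M.A i} (hx : ∀ r ≤ s, x r = x' r) (hb : ∀ r ≤ s, b r = b' r) :
    M.actWeight s x b = M.actWeight s x' b' := by
  unfold actWeight
  rw [hb s le_rfl]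
  exact prod_congr rfl fun i _ => M.g_adapted _ _ _ _ _ _ _
    (fun r hr => by rw [hx r hr]) (fun r hr => hb r hr.le)

theorem stepWeight_congr {v : M.V} {s : Fin T} {x x' : Fin T → ∀ i, M.X i}
    {b b' : Fin T → ∀ i, M.A i} (hx : ∀ r ≤ s, x r = x' r) (hb : ∀ r ≤ s, b r = b' r) :
    M.stepWeight v s x b = M.stepWeight v s x' b' := by
  rw [stepWeight, stepWeight, obsWeight_congr (hx s le_rfl) fun r hr => hb r hr.le,
    actWeight_congr hx hb]

variable (M)

theorem sum_actWeight_update (s : Fin T) (x : Fin T → ∀ i, M.X i) (b : Fin T → ∀ i, M.A i) :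
    ∑ c, M.actWeight s x (Function.update b s c) = 1 := by
  have h c : M.actWeight s x (Function.update b s c) = ∏ i, M.g i s (c i) (fun r => x r i) b :=
    prod_congr rfl fun i _ => by
      rw [Function.update_self]
      exact M.g_adapted _ _ _ _ _ _ _ (fun _ _ => rfl)
        fun r hr => Function.update_of_ne hr.ne _ _
  rw [sum_congr rfl fun c _ => h c, ← Fintype.prod_sum fun i ai => M.g i s ai (fun r => x r i) b]
  simp only [M.g_sum, prod_const_one]

theorem sum_obsWeight_update (v : M.V) (s : Fin T) (x : Fin T → ∀ i, M.X i)
    (b : Fin T → ∀ i, M.A i) :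
    ∑ c, M.obsWeight v s (Function.update x s c) b = 1 := by
  simp only [obsWeight, Function.update_self]
  rw [← Fintype.prod_sum fun i xi => M.QX i xi v (M.prevA b s)]
  simp only [M.QX_sum, prod_const_one]

theorem sum_sum_mul_actWeight (s : Fin T)
    {f : (Fin T → ∀ i, M.X i) → (Fin T → ∀ i, M.A i) → ℝ}
    (hf : ∀ x b c, f x (Function.update b s c) = f x b) :
    ∑ x, ∑ b, f x b * M.actWeight s x b
      = (∑ x, ∑ b, f x b) / Fintype.card (∀ i, M.A i) := by
  rw [sum_div]
  exact sum_congr rfl fun x _ =>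
    Fintype.sum_mul_eq_sum_div_card s (hf x) (M.sum_actWeight_update s x)

theorem sum_sum_mul_obsWeight (v : M.V) (s : Fin T)
    {f : (Fin T → ∀ i, M.X i) → (Fin T → ∀ i, M.A i) → ℝ}
    (hf : ∀ x b c, f (Function.update x s c) b = f x b) :
    ∑ x, ∑ b, f x b * M.obsWeight v s x b
      = (∑ x, ∑ b, f x b) / Fintype.card (∀ i, M.X i) := by
  rw [sum_comm, (sum_comm : ∑ x, ∑ b, f x b = _), sum_div]
  exact sum_congr rfl fun b _ =>
    Fintype.sum_mul_eq_sum_div_card s (fun x c => hf x b c) fun x =>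
      M.sum_obsWeight_update v s x b

theorem sum_sum_mul_prod_stepWeight (v : M.V) (t : Fin T)
    {f : (Fin T → ∀ i, M.X i) → (Fin T → ∀ i, M.A i) → ℝ}
    (hf : ∀ x x' b b', (∀ r ≤ t, x r = x' r) → (∀ r ≤ t, b r = b' r) →
      f x b = f x' b')
    {S : Finset (Fin T)} (hS : ∀ s ∈ S, t < s) :
    ∑ x, ∑ b, f x b * ∏ s ∈ S, M.stepWeight v s x b
      = (∑ x, ∑ b, f x b)
          / (Fintype.card (∀ i, M.X i) * Fintype.card (∀ i, M.A i)) ^ #S := by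
  induction S using Finset.induction_on_max with
  | empty => simp
  | insert k S hlt ih =>
    have hk : t < k := hS k (mem_insert_self k S)
    have hkS : k ∉ S := fun h => lt_irrefl k (hlt k h)
    have hpast : ∀ x x' b b', (∀ r < k, x r = x' r) → (∀ r < k, b r = b' r) →
        f x b * ∏ s ∈ S, M.stepWeight v s x b = f x' b' * ∏ s ∈ S, M.stepWeight v s x' b' :=
      fun x x' b b' hx hb => by
        rw [hf x x' b b' (fun r hr => hx r (hr.trans_lt hk)) fun r hr => hb r (hr.trans_lt hk),
          prod_congr rfl fun s hs => stepWeight_congr (fun r hr => hx r (hr.trans_lt (hlt s hs)))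
            fun r hr => hb r (hr.trans_lt (hlt s hs))]
    calc ∑ x, ∑ b, f x b * ∏ s ∈ insert k S, M.stepWeight v s x b
        = ∑ x, ∑ b, f x b * (∏ s ∈ S, M.stepWeight v s x b) * M.obsWeight v k x b
            * M.actWeight k x b :=
          sum_congr rfl fun x _ => sum_congr rfl fun b _ => by
            rw [prod_insert hkS, stepWeight]; ring
      _ = (∑ x, ∑ b, f x b * (∏ s ∈ S, M.stepWeight v s x b) * M.obsWeight v k x b)
            / Fintype.card (∀ i, M.A i) :=
          M.sum_sum_mul_actWeight k fun x b c => by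
            rw [hpast x x (Function.update b k c) b (fun _ _ => rfl)
                fun r hr => Function.update_of_ne hr.ne _ _,
              obsWeight_congr rfl fun r hr => Function.update_of_ne hr.ne _ _]
      _ = (∑ x, ∑ b, f x b * ∏ s ∈ S, M.stepWeight v s x b)
            / Fintype.card (∀ i, M.X i) / Fintype.card (∀ i, M.A i) := by
          rw [M.sum_sum_mul_obsWeight v k fun x b c =>
            hpast _ _ _ _ (fun r hr => Function.update_of_ne hr.ne _ _) fun _ _ => rfl]
      _ = _ := by
          rw [ih fun s hs => hS s (mem_insert_of_mem hs), card_insert_of_notMem hkS, pow_succ,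
            div_div, div_div]

noncomputable def prefixWeight (v : M.V) (t : Fin T) (x : Fin T → ∀ i, M.X i)
    (b : Fin T → ∀ i, M.A i) : ℝ :=
  (∏ s ∈ Iio t, M.stepWeight v s x b) * M.obsWeight v t x b

theorem prod_stepWeight_eq (v : M.V) (t : Fin T) (x : Fin T → ∀ i, M.X i)
    (b : Fin T → ∀ i, M.A i) :
    ∏ s, M.stepWeight v s x b
      = M.prefixWeight v t x b * M.actWeight t x b * ∏ s ∈ Ioi t, M.stepWeight v s x b := by
  rw [← prod_filter_mul_prod_filter_not univ (· ≤ t),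
    show ({s | s ≤ t} : Finset (Fin T)) = Iic t by ext; simp,
    show ({s | ¬s ≤ t} : Finset (Fin T)) = Ioi t by ext; simp,
    ← prod_Iio_mul_eq_prod_Iic, stepWeight, prefixWeight, ← mul_assoc]

variable {M} in
theorem prefixWeight_congr {v : M.V} {t : Fin T} {x x' : Fin T → ∀ i, M.X i}
    {b b' : Fin T → ∀ i, M.A i} (hx : ∀ r ≤ t, x r = x' r) (hb : ∀ r < t, b r = b' r) :
    M.prefixWeight v t x b = M.prefixWeight v t x' b' := by
  rw [prefixWeight, prefixWeight, obsWeight_congr (hx t le_rfl) hb, prod_congr rfl fun s hs =>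
    stepWeight_congr (fun r hr => hx r (hr.trans (mem_Iio.1 hs).le))
      fun r hr => hb r (hr.trans_lt (mem_Iio.1 hs))]

noncomputable def privateWeight (t : Fin T) (v : M.V) (a : Fin T → ∀ i, M.A i) (i : Fin N)
    (y : Fin T → M.X i) : ℝ :=
  (∏ s ∈ Iio t, M.QX i (y s) v (M.prevA a s) * M.g i s (a s i) y a) *
    M.QX i (y t) v (M.prevA a t)

theorem prefixWeight_eq_prod_privateWeight (v : M.V) (t : Fin T) (x : Fin T → ∀ i, M.X i)
    (a : Fin T → ∀ i, M.A i) :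
    M.prefixWeight v t x a = ∏ i, M.privateWeight t v a i fun s => x s i := by
  simp only [prefixWeight, stepWeight, obsWeight, actWeight, privateWeight, prod_mul_distrib]
  rw [prod_comm (s := Iio t), prod_comm (s := Iio t)]

open Classical in
/-- The sum runs over whole paths `y`, so the coordinates after `t`, on which `privateWeight`
does not depend, contribute a constant factor. -/
noncomputable def privateMass (t : Fin T) (v : M.V) (a : Fin T → ∀ i, M.A i) (i : Fin N)
    (p : (Fin T → M.X i) → Prop) : ℝ :=
  ∑ y, if p y then M.privateWeight t v a i y else 0

open Classical in
theorem Pr_eq_QV_mul_sum (v : M.V)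
    (E : (Fin T → ∀ i, M.X i) → (Fin T → ∀ i, M.A i) → Prop) :
    M.Pr (fun ω => ω.1 = v ∧ E ω.2.1 ω.2.2)
      = M.QV v * ∑ x, ∑ b, if E x b then ∏ s, M.stepWeight v s x b else 0 := by
  rw [Pr, Fintype.sum_prod_type, Fintype.sum_eq_single v]
  · simp only [true_and, Fintype.sum_prod_type, jointP_eq, mul_sum, mul_ite, mul_zero]
  · exact fun v' hv => sum_eq_zero fun ω _ => if_neg fun h => hv h.1

open Classical in
theorem sum_sum_prefixWeight_eq (t : Fin T) (v : M.V) (a : Fin T → ∀ i, M.A i)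
    (p : ∀ i, (Fin T → M.X i) → Prop) :
    ∑ x, ∑ b, (if (∀ i, p i fun s => x s i) ∧ (∀ s < t, b s = a s)
        then M.prefixWeight v t x b else 0)
      = #{b : Fin T → ∀ i, M.A i | ∀ s < t, b s = a s}
          * ∏ i, M.privateMass t v a i (p i) := by
  have hcollapse x : ∑ b, (if (∀ i, p i fun s => x s i) ∧ (∀ s < t, b s = a s)
        then M.prefixWeight v t x b else 0)
      = #{b : Fin T → ∀ i, M.A i | ∀ s < t, b s = a s} *
          if ∀ i, p i (fun s => x s i) then M.prefixWeight v t x a else 0 := by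
    by_cases hx : ∀ i, p i fun s => x s i
    · simp only [and_iff_right hx, if_pos hx]
      rw [← sum_filter, sum_congr rfl fun b hb =>
        prefixWeight_congr (fun _ _ => rfl) (mem_filter.1 hb).2, sum_const, nsmul_eq_mul]
    · simp only [hx, false_and, if_false, sum_const_zero, mul_zero]
  rw [sum_congr rfl fun x _ => hcollapse x, ← mul_sum]
  simp only [prefixWeight_eq_prod_privateWeight, privateMass]
  rw [← Fintype.sum_prod_piComm]
  simp only [Fintype.prod_ite_zero]
  congr! 3

theorem exists_Pr_eq_mul_prod_privateMass (t : Fin T) (v : M.V) (a : Fin T → ∀ i, M.A i) :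
    ∃ K : ℝ, ∀ p : ∀ i, (Fin T → M.X i) → Prop,
      (∀ i y y', (∀ s ≤ t, y s = y' s) → (p i y ↔ p i y')) →
      M.Pr (fun ω => (∀ i, p i fun s => ω.2.1 s i) ∧ ω.1 = v ∧ ∀ s < t, ω.2.2 s = a s)
        = K * ∏ i, M.privateMass t v a i (p i) := by
  classical
  refine ⟨M.QV v * #{b : Fin T → ∀ i, M.A i | ∀ s < t, b s = a s}
    / Fintype.card (∀ i, M.A i)
    / (Fintype.card (∀ i, M.X i) * Fintype.card (∀ i, M.A i)) ^ #(Ioi t), fun p hp => ?_⟩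
  set P : (Fin T → ∀ i, M.X i) → Prop := fun x => ∀ i, p i fun s => x s i
  set Q : (Fin T → ∀ i, M.A i) → Prop := fun b => ∀ s < t, b s = a s
  have hP x x' (hx : ∀ r ≤ t, x r = x' r) : P x ↔ P x' :=
    forall_congr' fun i => hp i _ _ fun s hs => by rw [hx s hs]
  have hQ b b' (hb : ∀ r < t, b r = b' r) : Q b ↔ Q b' :=
    forall₂_congr fun s hs => by rw [hb s hs]
  calc M.Pr (fun ω => P ω.2.1 ∧ ω.1 = v ∧ Q ω.2.2)
      = M.QV v * ∑ x, ∑ b,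
          (if P x ∧ Q b then M.prefixWeight v t x b * M.actWeight t x b else 0)
            * ∏ s ∈ Ioi t, M.stepWeight v s x b := by
        rw [show (fun ω : M.Hist => P ω.2.1 ∧ ω.1 = v ∧ Q ω.2.2)
              = fun ω => ω.1 = v ∧ P ω.2.1 ∧ Q ω.2.2 from
            funext fun ω => propext and_left_comm,
          M.Pr_eq_QV_mul_sum v fun x b => P x ∧ Q b]
        simp only [M.prod_stepWeight_eq v t, ite_mul, zero_mul]
    _ = M.QV v * (∑ x, ∑ b, (if P x ∧ Q b then M.prefixWeight v t x b else 0)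
            * M.actWeight t x b)
          / (Fintype.card (∀ i, M.X i) * Fintype.card (∀ i, M.A i)) ^ #(Ioi t) := by
        rw [M.sum_sum_mul_prod_stepWeight v t ?_ fun s hs => mem_Ioi.1 hs, mul_div_assoc]
        · simp only [ite_mul, zero_mul]
        · intro x x' b b' hx hb
          simp only [hP x x' hx, hQ b b' fun r hr => hb r hr.le,
            prefixWeight_congr hx fun r hr => hb r hr.le, actWeight_congr hx hb]
    _ = _ := by
        rw [M.sum_sum_mul_actWeight t, M.sum_sum_prefixWeight_eq]
        · ring
        · intro x b c
          have hbc : ∀ r < t, Function.update b t c r = b r :=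
            fun r hr => Function.update_of_ne hr.ne _ _
          simp only [hQ _ _ hbc, prefixWeight_congr (fun _ _ => rfl) hbc]

theorem exists_Pr_obs_eq_mul_prod (t : Fin T) (v : M.V) (a : Fin T → ∀ i, M.A i)
    (x : Fin T → ∀ i, M.X i) :
    ∃ K : ℝ,
      M.Pr (fun ω => (∀ s ≤ t, ω.2.1 s = x s) ∧ ω.1 = v ∧ ∀ s < t, ω.2.2 s = a s)
        = K * ∏ i, M.privateMass t v a i (fun y => ∀ s ≤ t, y s = x s i) ∧
      (∀ i,
        M.Pr (fun ω => (∀ s ≤ t, ω.2.1 s i = x s i) ∧ ω.1 = v ∧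
            ∀ s < t, ω.2.2 s = a s)
          = K * ∏ j, Function.update (fun j => M.privateMass t v a j fun _ => True) i
            (M.privateMass t v a i fun y => ∀ s ≤ t, y s = x s i) j) ∧
      M.Pr (fun ω => ω.1 = v ∧ ∀ s < t, ω.2.2 s = a s)
        = K * ∏ i, M.privateMass t v a i fun _ => True := by
  obtain ⟨K, hK⟩ := M.exists_Pr_eq_mul_prod_privateMass t v a
  let obsMatch : ∀ i, (Fin T → M.X i) → Prop := fun i y => ∀ s ≤ t, y s = x s i
  let unconstrained : ∀ i, (Fin T → M.X i) → Prop := fun _ _ => True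
  have hMatch i y y' (h : ∀ s ≤ t, y s = y' s) : obsMatch i y ↔ obsMatch i y' :=
    forall₂_congr fun s hs => by rw [h s hs]
  have hUnconstrained i (y y' : Fin T → M.X i) (_ : ∀ s ≤ t, y s = y' s) :
      unconstrained i y ↔ unconstrained i y' := Iff.rfl
  refine ⟨K, ?_, fun i => ?_, ?_⟩
  · rw [← hK obsMatch hMatch]
    refine congrArg M.Pr (funext fun ω => propext (and_congr_left' ?_))
    simp only [obsMatch, funext_iff]
    exact ⟨fun h i s hs => h s hs i, fun h s hs i => h i s hs⟩
  · have hmass j : M.privateMass t v a j (Function.update unconstrained i (obsMatch i) j)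
        = Function.update (fun j => M.privateMass t v a j (unconstrained j)) i
            (M.privateMass t v a i (obsMatch i)) j :=
      Function.apply_update (fun j => M.privateMass t v a j) _ i _ j
    rw [← prod_congr rfl fun j _ => hmass j, ← hK _ ?_]
    · refine congrArg M.Pr (funext fun ω => propext (and_congr_left' ?_))
      rw [Function.forall_update_iff unconstrained fun j q => q fun s => ω.2.1 s j]
      simp [obsMatch, unconstrained]
    · exact (Function.forall_update_iff unconstrained
        fun j q => ∀ y y', (∀ s ≤ t, y s = y' s) → (q y ↔ q y')).2
          ⟨hMatch i, fun j _ => hUnconstrained j⟩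
  · rw [← hK unconstrained hUnconstrained]
    simp [unconstrained]

end GameModel

/-- the private observation histories of the players are conditionally
independent given the state of the world `v` and the public action history `a_{1:t-1}`:
`ℙ(X_{1:t} = x_{1:t} | V = v, A_{1:t-1} = a_{1:t-1})
  = ∏_i ℙ(X^i_{1:t} = x^i_{1:t} | V = v, A_{1:t-1} = a_{1:t-1})`,
whenever the conditioning event has positive probability.
(Here `t : Fin T` is the index of the time called `t`, so `x_{1:t}` is the condition
on indices `s ≤ t` and `a_{1:t-1}` the condition on indices `s < t`.) -/
theorem conditional_independence_of_private_histories
    (M : GameModel N T) (t : Fin T) (v : M.V)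
    (a : Fin T → ∀ i, M.A i) (x : Fin T → ∀ i, M.X i)
    (hpos : 0 < M.Pr fun ω => ω.1 = v ∧ ∀ s, s < t → ω.2.2 s = a s) :
    M.Pr (fun ω => (∀ s, s ≤ t → ω.2.1 s = x s) ∧ ω.1 = v ∧ ∀ s, s < t → ω.2.2 s = a s)
        / M.Pr (fun ω => ω.1 = v ∧ ∀ s, s < t → ω.2.2 s = a s)
      = ∏ i : Fin N,
          M.Pr (fun ω => (∀ s, s ≤ t → ω.2.1 s i = x s i) ∧
              ω.1 = v ∧ ∀ s, s < t → ω.2.2 s = a s)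
            / M.Pr (fun ω => ω.1 = v ∧ ∀ s, s < t → ω.2.2 s = a s) := by
  obtain ⟨K, hjoint, hmarginal, hcond⟩ := M.exists_Pr_obs_eq_mul_prod t v a x
  exact div_eq_prod_div_of_eq_mul_prod K _ _ hjoint hmarginal hcond hpos.ne'
end

section
/- In the finite dynamic game model, any per-player statistics of the private histories are conditionally independent given the state of the world and the public action history: for every time t, let f^i : (𝒳^i)^t × (∏_j 𝒜^j)^{t-1} → ℬ^i be arbitrary functions into finite sets ℬ^i and set B^i = f^i(X^i_{1:t}, A_{1:t-1}). Then for every v, a_{1:t-1} with ℙ(V = v, A_{1:t-1} = a_{1:t-1}) > 0 and every (b^1,…,b^N), one has ℙ(B^1 = b^1, …, B^N = b^N | V = v, A_{1:t-1} = a_{1:t-1}) = ∏_{i=1}^{N} ℙ(B^i = b^i | V = v, A_{1:t-1} = a_{1:t-1}). (In particular, the players' private beliefs over V, being functions of their private histories, are conditionally independent given V and the public actions.) -/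
open Finset

variable {N T : ℕ}

private lemma nonempty_of_sum_one' {α : Type*} [Fintype α] {f : α → ℝ}
    (h : ∑ x, f x = 1) : Nonempty α := by
  by_contra hc
  rw [not_nonempty_iff] at hc
  rw [Finset.univ_eq_empty, Finset.sum_empty] at h
  norm_num at h

lemma GameModel.X_nonempty' (M : GameModel N T) (i : Fin N) : Nonempty (M.X i) := by
  obtain ⟨v⟩ := nonempty_of_sum_one' M.QV_sum
  exact nonempty_of_sum_one' (M.QX_sum i v M.a0)

lemma GameModel.A_nonempty' (M : GameModel N T) (t : Fin T) (i : Fin N) : Nonempty (M.A i) := by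
  have : ∀ j, Nonempty (M.X j) := M.X_nonempty'
  exact nonempty_of_sum_one'
    (M.g_sum i t (fun _ => Classical.arbitrary _) (fun _ _ => M.a0 _))

private lemma sum_coord_replace' {ι : Type*} [Fintype ι] [DecidableEq ι] {β : ι → Type*}
    [∀ j, Fintype (β j)] (c : ι) [Nonempty (β c)]
    (R u w : (∀ j, β j) → ℝ)
    (hR : ∀ y z, R (Function.update y c z) = R y)
    (hs : ∀ y, (∑ z, u (Function.update y c z)) = ∑ z, w (Function.update y c z)) :
    ∑ y, R y * u y = ∑ y, R y * w y := by
  classical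
  obtain ⟨z₀⟩ := ‹Nonempty (β c)›
  have hupd : ∀ (z : β c) (y' : ∀ j : {j // j ≠ c}, β j),
      (Equiv.piSplitAt c β).symm (z, y') =
        Function.update ((Equiv.piSplitAt c β).symm (z₀, y')) c z := by
    intro z y'
    funext j
    by_cases hj : j = c
    · subst hj; simp
    · simp [Equiv.piSplitAt_symm_apply, hj, Function.update_of_ne hj]
  have key : ∀ (F : (∀ j, β j) → ℝ),
      ∑ y, F y = ∑ y' : ∀ j : {j // j ≠ c}, β j, ∑ z : β c,
        F ((Equiv.piSplitAt c β).symm (z, y')) := by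
    intro F
    rw [← Equiv.sum_comp (Equiv.piSplitAt c β).symm F, Fintype.sum_prod_type,
      Finset.sum_comm]
  rw [key (fun y => R y * u y), key (fun y => R y * w y)]
  refine Finset.sum_congr rfl fun y' _ => ?_
  have hRconst : ∀ z : β c, R ((Equiv.piSplitAt c β).symm (z, y'))
      = R ((Equiv.piSplitAt c β).symm (z₀, y')) := by
    intro z; rw [hupd z y', hR]
  calc ∑ z, R ((Equiv.piSplitAt c β).symm (z, y')) * u ((Equiv.piSplitAt c β).symm (z, y'))
      = R ((Equiv.piSplitAt c β).symm (z₀, y')) *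
          ∑ z, u (Function.update ((Equiv.piSplitAt c β).symm (z₀, y')) c z) := by
        rw [Finset.mul_sum]
        exact Finset.sum_congr rfl fun z _ => by rw [hRconst z, hupd z y']
    _ = R ((Equiv.piSplitAt c β).symm (z₀, y')) *
          ∑ z, w (Function.update ((Equiv.piSplitAt c β).symm (z₀, y')) c z) := by
        rw [hs]
    _ = ∑ z, R ((Equiv.piSplitAt c β).symm (z, y')) * w ((Equiv.piSplitAt c β).symm (z, y')) := by
        rw [Finset.mul_sum]
        exact Finset.sum_congr rfl fun z _ => by rw [hRconst z, hupd z y']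

private lemma prevA_congr' (M : GameModel N T) {b b' : Fin T → ∀ i, M.A i} (s : Fin T)
    (h : ∀ u : Fin T, u.val + 1 = s.val → b u = b' u) : M.prevA b s = M.prevA b' s := by
  unfold GameModel.prevA
  split_ifs with h0
  · rfl
  · exact h _ (show s.val - 1 + 1 = s.val by omega)

open Classical in
/-- Per-player truncated weight. -/
noncomputable def qxgW (M : GameModel N T) (t : Fin T) (v : M.V) (a : Fin T → ∀ j, M.A j)
    (i : Fin N) (y : Fin T → M.X i) : ℝ :=
  ∏ s : Fin T,
    (if s ≤ t then M.QX i (y s) v (M.prevA a s) else ((Fintype.card (M.X i) : ℝ))⁻¹) *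
    (if s < t then M.g i s (a s i) y a else ((Fintype.card (M.A i) : ℝ))⁻¹)

open Classical in
/-- Partially eliminated sum: factors `QX` at time `s` are present iff `2s < m`, and
factors `g` at time `s` iff `2s+1 < m`; eliminated factors are replaced by
inverse cardinalities. -/
noncomputable def elimS (M : GameModel N T) (t : Fin T) (v : M.V) (a : Fin T → ∀ j, M.A j)
    (p : ∀ i, (Fin T → M.X i) → Prop) (m : ℕ) : ℝ :=
  ∑ x : Fin T → ∀ i, M.X i, ∑ b : Fin T → ∀ j, M.A j,
    if (∀ i, p i fun s => x s i) ∧ (∀ s, s < t → b s = a s) then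
      ∏ s : Fin T, ∏ i : Fin N,
        (if 2 * s.val < m then M.QX i (x s i) v (M.prevA b s)
          else ((Fintype.card (M.X i) : ℝ))⁻¹) *
        (if 2 * s.val + 1 < m then M.g i s (b s i) (fun u => x u i) b
          else ((Fintype.card (M.A i) : ℝ))⁻¹)
    else 0

lemma elimS_succ (M : GameModel N T) (t : Fin T) (v : M.V) (a : Fin T → ∀ j, M.A j)
    (p : ∀ i, (Fin T → M.X i) → Prop)
    (hp : ∀ i x x', (∀ s : Fin T, s ≤ t → x s = x' s) → (p i x ↔ p i x'))
    (m : ℕ) (hm : 2 * t.val + 1 ≤ m) :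
    elimS M t v a p (m + 1) = elimS M t v a p m := by
  classical
  have hXne : ∀ j, Nonempty (M.X j) := M.X_nonempty'
  have hAne : ∀ j, Nonempty (M.A j) := M.A_nonempty' t
  by_cases hmT : 2 * T ≤ m
  · unfold elimS
    refine Finset.sum_congr rfl fun x _ => Finset.sum_congr rfl fun b _ => ?_
    refine if_congr Iff.rfl (Finset.prod_congr rfl fun s _ => Finset.prod_congr rfl fun i _ => ?_) rfl
    have hs := s.isLt
    have h1 : (2 * s.val < m + 1) ↔ (2 * s.val < m) := by omega
    have h2 : (2 * s.val + 1 < m + 1) ↔ (2 * s.val + 1 < m) := by omega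
    rw [if_congr h1 rfl rfl, if_congr h2 rfl rfl]
  push_neg at hmT
  rcases Nat.even_or_odd m with ⟨k, hk⟩ | ⟨k, hk⟩
  · -- m = 2k : eliminate the QX factor at time k, coordinate x_k
    have hkT : k < T := by omega
    have htk : t.val < k := by omega
    set sF : Fin T := ⟨k, hkT⟩ with hsF
    unfold elimS
    conv_lhs => rw [Finset.sum_comm]
    conv_rhs => rw [Finset.sum_comm]
    refine Finset.sum_congr rfl fun b _ => ?_
    set R : (Fin T → ∀ i, M.X i) → ℝ := fun x =>
      if (∀ i, p i fun s => x s i) ∧ (∀ s, s < t → b s = a s) then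
        (∏ s ∈ Finset.univ.erase sF, ∏ i : Fin N,
          (if 2 * s.val < m then M.QX i (x s i) v (M.prevA b s)
            else ((Fintype.card (M.X i) : ℝ))⁻¹) *
          (if 2 * s.val + 1 < m then M.g i s (b s i) (fun u => x u i) b
            else ((Fintype.card (M.A i) : ℝ))⁻¹)) *
        ∏ i : Fin N, ((Fintype.card (M.A i) : ℝ))⁻¹
      else 0 with hRdef
    set u : (Fin T → ∀ i, M.X i) → ℝ := fun x =>
      ∏ i : Fin N, M.QX i (x sF i) v (M.prevA b sF) with hudef
    set w : (Fin T → ∀ i, M.X i) → ℝ := fun _ =>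
      ∏ i : Fin N, ((Fintype.card (M.X i) : ℝ))⁻¹ with hwdef
    have herase : ∀ (x : Fin T → ∀ i, M.X i) (s : Fin T), s ≠ sF →
        (∏ i : Fin N,
          (if 2 * s.val < m + 1 then M.QX i (x s i) v (M.prevA b s)
            else ((Fintype.card (M.X i) : ℝ))⁻¹) *
          (if 2 * s.val + 1 < m + 1 then M.g i s (b s i) (fun u => x u i) b
            else ((Fintype.card (M.A i) : ℝ))⁻¹))
        = ∏ i : Fin N,
          (if 2 * s.val < m then M.QX i (x s i) v (M.prevA b s)
            else ((Fintype.card (M.X i) : ℝ))⁻¹) *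
          (if 2 * s.val + 1 < m then M.g i s (b s i) (fun u => x u i) b
            else ((Fintype.card (M.A i) : ℝ))⁻¹) := by
      intro x s hs
      have hv : s.val ≠ k := fun h => hs (Fin.ext h)
      have h1 : (2 * s.val < m + 1) ↔ (2 * s.val < m) := by omega
      have h2 : (2 * s.val + 1 < m + 1) ↔ (2 * s.val + 1 < m) := by omega
      exact Finset.prod_congr rfl fun i _ => by
        rw [if_congr h1 rfl rfl, if_congr h2 rfl rfl]
    have hLeq : ∀ x : Fin T → ∀ i, M.X i,
        (if (∀ i, p i fun s => x s i) ∧ (∀ s, s < t → b s = a s) then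
          ∏ s : Fin T, ∏ i : Fin N,
            (if 2 * s.val < m + 1 then M.QX i (x s i) v (M.prevA b s)
              else ((Fintype.card (M.X i) : ℝ))⁻¹) *
            (if 2 * s.val + 1 < m + 1 then M.g i s (b s i) (fun u => x u i) b
              else ((Fintype.card (M.A i) : ℝ))⁻¹)
        else 0) = R x * u x := by
      intro x
      by_cases hc : (∀ i, p i fun s => x s i) ∧ (∀ s, s < t → b s = a s)
      · simp only [hRdef, hudef, hwdef, if_pos hc]
        rw [← Finset.mul_prod_erase Finset.univ _ (Finset.mem_univ sF)]
        rw [Finset.prod_congr rfl (fun s hs => herase x s (Finset.ne_of_mem_erase hs))]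
        have hsf : (∏ i : Fin N,
            (if 2 * sF.val < m + 1 then M.QX i (x sF i) v (M.prevA b sF)
              else ((Fintype.card (M.X i) : ℝ))⁻¹) *
            (if 2 * sF.val + 1 < m + 1 then M.g i sF (b sF i) (fun u => x u i) b
              else ((Fintype.card (M.A i) : ℝ))⁻¹))
            = u x * ∏ i : Fin N, ((Fintype.card (M.A i) : ℝ))⁻¹ := by
          have h1 : 2 * sF.val < m + 1 := show 2 * k < m + 1 by omega
          have h2 : ¬ (2 * sF.val + 1 < m + 1) := show ¬ (2 * k + 1 < m + 1) by omega
          rw [Finset.prod_congr rfl (fun i _ => by rw [if_pos h1, if_neg h2]),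
            Finset.prod_mul_distrib]
        rw [hsf]; ring
      · simp only [hRdef, if_neg hc, zero_mul]
    have hReq : ∀ x : Fin T → ∀ i, M.X i,
        (if (∀ i, p i fun s => x s i) ∧ (∀ s, s < t → b s = a s) then
          ∏ s : Fin T, ∏ i : Fin N,
            (if 2 * s.val < m then M.QX i (x s i) v (M.prevA b s)
              else ((Fintype.card (M.X i) : ℝ))⁻¹) *
            (if 2 * s.val + 1 < m then M.g i s (b s i) (fun u => x u i) b
              else ((Fintype.card (M.A i) : ℝ))⁻¹)
        else 0) = R x * w x := by
      intro x
      by_cases hc : (∀ i, p i fun s => x s i) ∧ (∀ s, s < t → b s = a s)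
      · simp only [hRdef, hudef, hwdef, if_pos hc]
        rw [← Finset.mul_prod_erase Finset.univ _ (Finset.mem_univ sF)]
        have hsf : (∏ i : Fin N,
            (if 2 * sF.val < m then M.QX i (x sF i) v (M.prevA b sF)
              else ((Fintype.card (M.X i) : ℝ))⁻¹) *
            (if 2 * sF.val + 1 < m then M.g i sF (b sF i) (fun u => x u i) b
              else ((Fintype.card (M.A i) : ℝ))⁻¹))
            = w x * ∏ i : Fin N, ((Fintype.card (M.A i) : ℝ))⁻¹ := by
          have h1 : ¬ (2 * sF.val < m) := show ¬ (2 * k < m) by omega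
          have h2 : ¬ (2 * sF.val + 1 < m) := show ¬ (2 * k + 1 < m) by omega
          rw [Finset.prod_congr rfl (fun i _ => by rw [if_neg h1, if_neg h2]),
            Finset.prod_mul_distrib]
        rw [hsf]; ring
      · simp only [hRdef, if_neg hc, zero_mul]
    rw [Finset.sum_congr rfl (fun x _ => hLeq x), Finset.sum_congr rfl (fun x _ => hReq x)]
    have : Nonempty (∀ i, M.X i) := ⟨fun i => Classical.arbitrary _⟩
    refine sum_coord_replace' sF R u w ?_ ?_
    · -- invariance of R under updating coordinate sF
      intro x z
      simp only [hRdef]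
      have hcond : ((∀ i, p i fun s => Function.update x sF z s i) ∧ (∀ s, s < t → b s = a s))
          ↔ ((∀ i, p i fun s => x s i) ∧ (∀ s, s < t → b s = a s)) := by
        refine and_congr ?_ Iff.rfl
        refine forall_congr' fun i => hp i _ _ fun s hs => ?_
        have : s ≠ sF := by
          intro h; subst h
          rw [Fin.le_def] at hs
          have hvk : ((⟨k, hkT⟩ : Fin T) : ℕ) = k := rfl
          omega
        rw [Function.update_of_ne this]
      by_cases hc : (∀ i, p i fun s => x s i) ∧ (∀ s, s < t → b s = a s)
      · rw [if_pos (hcond.mpr hc), if_pos hc]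
        congr 1
        refine Finset.prod_congr rfl fun s hs => Finset.prod_congr rfl fun i _ => ?_
        have hne : s ≠ sF := Finset.ne_of_mem_erase hs
        congr 1
        · congr 2
          rw [Function.update_of_ne hne]
        · by_cases h2 : 2 * s.val + 1 < m
          · rw [if_pos h2, if_pos h2]
            refine M.g_adapted i s _ _ _ b b (fun q hq => ?_) (fun _ _ => rfl)
            have : q ≠ sF := by
              intro h; subst h
              rw [Fin.le_def] at hq
              have hvk : ((⟨k, hkT⟩ : Fin T) : ℕ) = k := rfl
              omega
            rw [Function.update_of_ne this]
          · rw [if_neg h2, if_neg h2]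
      · rw [if_neg fun h => hc (hcond.mp h), if_neg hc]
    · -- equal coordinate sums
      intro x
      have hu : ∀ z : ∀ i, M.X i, u (Function.update x sF z)
          = ∏ i : Fin N, M.QX i (z i) v (M.prevA b sF) := by
        intro z
        simp only [hudef, Function.update_self]
      rw [Finset.sum_congr rfl fun z _ => hu z]
      rw [← Fintype.prod_sum (fun i zi => M.QX i zi v (M.prevA b sF))]
      simp only [M.QX_sum, Finset.prod_const_one]
      simp only [hwdef]
      rw [Finset.sum_const, Finset.card_univ, nsmul_eq_mul, Fintype.card_pi,
        Nat.cast_prod, ← Finset.prod_mul_distrib]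
      rw [Finset.prod_congr rfl fun i _ => mul_inv_cancel₀
        (by exact_mod_cast Fintype.card_ne_zero : ((Fintype.card (M.X i) : ℝ)) ≠ 0)]
      simp
  · -- m = 2k+1 : eliminate the g factor at time k, coordinate b_k
    have hkT : k < T := by omega
    have htk : t.val ≤ k := by omega
    set sF : Fin T := ⟨k, hkT⟩ with hsF
    unfold elimS
    refine Finset.sum_congr rfl fun x _ => ?_
    set R : (Fin T → ∀ j, M.A j) → ℝ := fun b =>
      if (∀ i, p i fun s => x s i) ∧ (∀ s, s < t → b s = a s) then
        (∏ s ∈ Finset.univ.erase sF, ∏ i : Fin N,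
          (if 2 * s.val < m then M.QX i (x s i) v (M.prevA b s)
            else ((Fintype.card (M.X i) : ℝ))⁻¹) *
          (if 2 * s.val + 1 < m then M.g i s (b s i) (fun u => x u i) b
            else ((Fintype.card (M.A i) : ℝ))⁻¹)) *
        ∏ i : Fin N, M.QX i (x sF i) v (M.prevA b sF)
      else 0 with hRdef
    set u : (Fin T → ∀ j, M.A j) → ℝ := fun b =>
      ∏ i : Fin N, M.g i sF (b sF i) (fun s => x s i) b with hudef
    set w : (Fin T → ∀ j, M.A j) → ℝ := fun _ =>
      ∏ i : Fin N, ((Fintype.card (M.A i) : ℝ))⁻¹ with hwdef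
    have herase : ∀ (b : Fin T → ∀ j, M.A j) (s : Fin T), s ≠ sF →
        (∏ i : Fin N,
          (if 2 * s.val < m + 1 then M.QX i (x s i) v (M.prevA b s)
            else ((Fintype.card (M.X i) : ℝ))⁻¹) *
          (if 2 * s.val + 1 < m + 1 then M.g i s (b s i) (fun u => x u i) b
            else ((Fintype.card (M.A i) : ℝ))⁻¹))
        = ∏ i : Fin N,
          (if 2 * s.val < m then M.QX i (x s i) v (M.prevA b s)
            else ((Fintype.card (M.X i) : ℝ))⁻¹) *
          (if 2 * s.val + 1 < m then M.g i s (b s i) (fun u => x u i) b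
            else ((Fintype.card (M.A i) : ℝ))⁻¹) := by
      intro b s hs
      have hv : s.val ≠ k := fun h => hs (Fin.ext h)
      have h1 : (2 * s.val < m + 1) ↔ (2 * s.val < m) := by omega
      have h2 : (2 * s.val + 1 < m + 1) ↔ (2 * s.val + 1 < m) := by omega
      exact Finset.prod_congr rfl fun i _ => by
        rw [if_congr h1 rfl rfl, if_congr h2 rfl rfl]
    have hLeq : ∀ b : Fin T → ∀ j, M.A j,
        (if (∀ i, p i fun s => x s i) ∧ (∀ s, s < t → b s = a s) then
          ∏ s : Fin T, ∏ i : Fin N,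
            (if 2 * s.val < m + 1 then M.QX i (x s i) v (M.prevA b s)
              else ((Fintype.card (M.X i) : ℝ))⁻¹) *
            (if 2 * s.val + 1 < m + 1 then M.g i s (b s i) (fun u => x u i) b
              else ((Fintype.card (M.A i) : ℝ))⁻¹)
        else 0) = R b * u b := by
      intro b
      by_cases hc : (∀ i, p i fun s => x s i) ∧ (∀ s, s < t → b s = a s)
      · simp only [hRdef, hudef, hwdef, if_pos hc]
        rw [← Finset.mul_prod_erase Finset.univ _ (Finset.mem_univ sF)]
        rw [Finset.prod_congr rfl (fun s hs => herase b s (Finset.ne_of_mem_erase hs))]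
        have hsf : (∏ i : Fin N,
            (if 2 * sF.val < m + 1 then M.QX i (x sF i) v (M.prevA b sF)
              else ((Fintype.card (M.X i) : ℝ))⁻¹) *
            (if 2 * sF.val + 1 < m + 1 then M.g i sF (b sF i) (fun u => x u i) b
              else ((Fintype.card (M.A i) : ℝ))⁻¹))
            = (∏ i : Fin N, M.QX i (x sF i) v (M.prevA b sF)) * u b := by
          have h1 : 2 * sF.val < m + 1 := show 2 * k < m + 1 by omega
          have h2 : 2 * sF.val + 1 < m + 1 := show 2 * k + 1 < m + 1 by omega
          rw [Finset.prod_congr rfl (fun i _ => by rw [if_pos h1, if_pos h2]),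
            Finset.prod_mul_distrib]
        rw [hsf]; ring
      · simp only [hRdef, if_neg hc, zero_mul]
    have hReq : ∀ b : Fin T → ∀ j, M.A j,
        (if (∀ i, p i fun s => x s i) ∧ (∀ s, s < t → b s = a s) then
          ∏ s : Fin T, ∏ i : Fin N,
            (if 2 * s.val < m then M.QX i (x s i) v (M.prevA b s)
              else ((Fintype.card (M.X i) : ℝ))⁻¹) *
            (if 2 * s.val + 1 < m then M.g i s (b s i) (fun u => x u i) b
              else ((Fintype.card (M.A i) : ℝ))⁻¹)
        else 0) = R b * w b := by
      intro b
      by_cases hc : (∀ i, p i fun s => x s i) ∧ (∀ s, s < t → b s = a s)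
      · simp only [hRdef, hudef, hwdef, if_pos hc]
        rw [← Finset.mul_prod_erase Finset.univ _ (Finset.mem_univ sF)]
        have hsf : (∏ i : Fin N,
            (if 2 * sF.val < m then M.QX i (x sF i) v (M.prevA b sF)
              else ((Fintype.card (M.X i) : ℝ))⁻¹) *
            (if 2 * sF.val + 1 < m then M.g i sF (b sF i) (fun u => x u i) b
              else ((Fintype.card (M.A i) : ℝ))⁻¹))
            = (∏ i : Fin N, M.QX i (x sF i) v (M.prevA b sF)) * w b := by
          have h1 : 2 * sF.val < m := show 2 * k < m by omega
          have h2 : ¬ (2 * sF.val + 1 < m) := show ¬ (2 * k + 1 < m) by omega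
          rw [Finset.prod_congr rfl (fun i _ => by rw [if_pos h1, if_neg h2]),
            Finset.prod_mul_distrib]
        rw [hsf]; ring
      · simp only [hRdef, if_neg hc, zero_mul]
    rw [Finset.sum_congr rfl (fun b _ => hLeq b), Finset.sum_congr rfl (fun b _ => hReq b)]
    have : Nonempty (∀ j, M.A j) := ⟨fun j => Classical.arbitrary _⟩
    refine sum_coord_replace' sF R u w ?_ ?_
    · -- invariance of R under updating coordinate sF of b
      intro b z
      simp only [hRdef]
      have hbs : ∀ s : Fin T, s < t → Function.update b sF z s = b s := by
        intro s hst
        have hne : s ≠ sF := by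
          intro h; subst h
          rw [Fin.lt_def] at hst
          have hvk : ((⟨k, hkT⟩ : Fin T) : ℕ) = k := rfl
          omega
        rw [Function.update_of_ne hne]
      have hcond : ((∀ i, p i fun s => x s i) ∧
            (∀ s, s < t → Function.update b sF z s = a s))
          ↔ ((∀ i, p i fun s => x s i) ∧ (∀ s, s < t → b s = a s)) := by
        refine and_congr Iff.rfl (forall_congr' fun s => imp_congr_right fun hst => ?_)
        rw [hbs s hst]
      by_cases hc : (∀ i, p i fun s => x s i) ∧ (∀ s, s < t → b s = a s)
      · rw [if_pos (hcond.mpr hc), if_pos hc]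
        have hprevF : M.prevA (Function.update b sF z) sF = M.prevA b sF := by
          refine prevA_congr' M sF fun q hq => ?_
          have : q ≠ sF := by
            intro h; subst h
            have hvk : ((⟨k, hkT⟩ : Fin T) : ℕ) = k := rfl
            omega
          rw [Function.update_of_ne this]
        congr 1
        · refine Finset.prod_congr rfl fun s hs => Finset.prod_congr rfl fun i _ => ?_
          have hne : s ≠ sF := Finset.ne_of_mem_erase hs
          have hnev : s.val ≠ k := fun h => hne (Fin.ext h)
          congr 1
          · by_cases h1 : 2 * s.val < m
            · rw [if_pos h1, if_pos h1]
              congr 1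
              refine prevA_congr' M s fun q hq => ?_
              have : q ≠ sF := by
                intro h; subst h
                have hvk : ((⟨k, hkT⟩ : Fin T) : ℕ) = k := rfl
                omega
              rw [Function.update_of_ne this]
            · rw [if_neg h1, if_neg h1]
          · by_cases h2 : 2 * s.val + 1 < m
            · rw [if_pos h2, if_pos h2]
              have hslt : s.val < k := by omega
              have harg : Function.update b sF z s i = b s i := by
                rw [Function.update_of_ne hne]
              rw [harg]
              refine M.g_adapted i s _ _ _ _ _ (fun q _ => rfl) (fun q hq => ?_)
              have : q ≠ sF := by
                intro h; subst h
                rw [Fin.lt_def] at hq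
                have hvk : ((⟨k, hkT⟩ : Fin T) : ℕ) = k := rfl
                omega
              rw [Function.update_of_ne this]
            · rw [if_neg h2, if_neg h2]
        · refine Finset.prod_congr rfl fun i _ => ?_
          rw [hprevF]
      · rw [if_neg fun h => hc (hcond.mp h), if_neg hc]
    · -- equal coordinate sums
      intro b
      have hu : ∀ z : ∀ j, M.A j, u (Function.update b sF z)
          = ∏ i : Fin N, M.g i sF (z i) (fun s => x s i) b := by
        intro z
        simp only [hudef, Function.update_self]
        refine Finset.prod_congr rfl fun i _ => ?_
        refine M.g_adapted i sF _ _ _ _ _ (fun q _ => rfl) (fun q hq => ?_)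
        have : q ≠ sF := fun h => by subst h; exact absurd hq (lt_irrefl _)
        rw [Function.update_of_ne this]
      rw [Finset.sum_congr rfl fun z _ => hu z]
      rw [← Fintype.prod_sum (fun i zi => M.g i sF zi (fun s => x s i) b)]
      simp only [M.g_sum, Finset.prod_const_one]
      simp only [hwdef]
      rw [Finset.sum_const, Finset.card_univ, nsmul_eq_mul, Fintype.card_pi,
        Nat.cast_prod, ← Finset.prod_mul_distrib]
      rw [Finset.prod_congr rfl fun i _ => mul_inv_cancel₀
        (by exact_mod_cast Fintype.card_ne_zero : ((Fintype.card (M.A i) : ℝ)) ≠ 0)]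
      simp

lemma elimS_tel (M : GameModel N T) (t : Fin T) (v : M.V) (a : Fin T → ∀ j, M.A j)
    (p : ∀ i, (Fin T → M.X i) → Prop)
    (hp : ∀ i x x', (∀ s : Fin T, s ≤ t → x s = x' s) → (p i x ↔ p i x'))
    (m : ℕ) (hm : 2 * t.val + 1 ≤ m) :
    elimS M t v a p m = elimS M t v a p (2 * t.val + 1) := by
  induction m, hm using Nat.le_induction with
  | base => rfl
  | succ n hn ih => rw [elimS_succ M t v a p hp n hn, ih]

private lemma sum_hist' {α β γ : Type*} [Fintype α] [Fintype β] [Fintype γ]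
    (f : α × β × γ → ℝ) : ∑ ω : α × β × γ, f ω = ∑ a, ∑ b, ∑ c, f (a, b, c) := by
  rw [Fintype.sum_prod_type]
  exact Finset.sum_congr rfl fun a _ => Fintype.sum_prod_type _

open Classical in
lemma Pr_eq_elimS (M : GameModel N T) (t : Fin T) (v : M.V) (a : Fin T → ∀ j, M.A j)
    (p : ∀ i, (Fin T → M.X i) → Prop) :
    M.Pr (fun ω => (∀ i, p i fun s => ω.2.1 s i) ∧ ω.1 = v ∧ ∀ s, s < t → ω.2.2 s = a s)
      = M.QV v * elimS M t v a p (2 * T) := by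
  classical
  unfold GameModel.Pr
  rw [sum_hist']
  dsimp only
  have hstep : ∀ v' : M.V,
      (∑ x : Fin T → ∀ i, M.X i, ∑ bb : Fin T → ∀ j, M.A j,
        if (∀ i, p i fun s => x s i) ∧ v' = v ∧ ∀ s, s < t → bb s = a s then
          M.jointP (v', x, bb) else 0)
      = if v' = v then
          (∑ x : Fin T → ∀ i, M.X i, ∑ bb : Fin T → ∀ j, M.A j,
            if (∀ i, p i fun s => x s i) ∧ ∀ s, s < t → bb s = a s then
              M.jointP (v, x, bb) else 0) else 0 := by
    intro v'
    by_cases hv : v' = v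
    · subst hv
      rw [if_pos rfl]
      refine Finset.sum_congr rfl fun x _ => Finset.sum_congr rfl fun bb _ => ?_
      by_cases hc : (∀ i, p i fun s => x s i) ∧ ∀ s, s < t → bb s = a s
      · rw [if_pos ⟨hc.1, rfl, hc.2⟩, if_pos hc]
      · rw [if_neg (fun h => hc ⟨h.1, h.2.2⟩), if_neg hc]
    · rw [if_neg hv]
      refine Finset.sum_eq_zero fun x _ => Finset.sum_eq_zero fun bb _ => ?_
      rw [if_neg (fun h => hv h.2.1)]
  refine Eq.trans (Finset.sum_congr rfl fun v' _ => Eq.trans ?_ (hstep v')) ?_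
  · exact Finset.sum_congr rfl fun x _ => Finset.sum_congr rfl fun bb _ => by congr
  rw [Finset.sum_ite_eq' Finset.univ v _, if_pos (Finset.mem_univ v)]
  unfold elimS
  rw [Finset.mul_sum]
  refine Finset.sum_congr rfl fun x _ => ?_
  rw [Finset.mul_sum]
  refine Finset.sum_congr rfl fun bb _ => ?_
  by_cases hc : (∀ i, p i fun s => x s i) ∧ ∀ s, s < t → bb s = a s
  · rw [if_pos hc, if_pos hc]
    unfold GameModel.jointP
    dsimp only
    congr 1
    refine Finset.prod_congr rfl fun s _ => Finset.prod_congr rfl fun i _ => ?_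
    have h1 : 2 * s.val < 2 * T := by have := s.isLt; omega
    have h2 : 2 * s.val + 1 < 2 * T := by have := s.isLt; omega
    rw [if_pos h1, if_pos h2]
  · rw [if_neg hc, if_neg hc, mul_zero]

open Classical in
/-- Classical sum of `g` over the set where `c` holds. -/
noncomputable def sumIf {α : Type*} [Fintype α] (c : α → Prop) (g : α → ℝ) : ℝ :=
  ∑ y, if c y then g y else 0

open Classical in
lemma elimS_final (M : GameModel N T) (t : Fin T) (v : M.V) (a : Fin T → ∀ j, M.A j)
    (p : ∀ i, (Fin T → M.X i) → Prop) :
    elimS M t v a p (2 * t.val + 1)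
      = sumIf (fun bb : Fin T → ∀ j, M.A j => ∀ s, s < t → bb s = a s) (fun _ => (1:ℝ))
        * ∏ i : Fin N, sumIf (p i) (qxgW M t v a i) := by
  classical
  unfold sumIf elimS
  have hpt : ∀ (x : Fin T → ∀ i, M.X i) (bb : Fin T → ∀ j, M.A j),
      (if (∀ i, p i fun s => x s i) ∧ (∀ s, s < t → bb s = a s) then
        ∏ s : Fin T, ∏ i : Fin N,
          (if 2 * s.val < 2 * t.val + 1 then M.QX i (x s i) v (M.prevA bb s)
            else ((Fintype.card (M.X i) : ℝ))⁻¹) *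
          (if 2 * s.val + 1 < 2 * t.val + 1 then M.g i s (bb s i) (fun u => x u i) bb
            else ((Fintype.card (M.A i) : ℝ))⁻¹)
      else 0)
      = (if (∀ s, s < t → bb s = a s) then (1:ℝ) else 0) *
        ∏ i : Fin N, (if p i (fun s => x s i) then qxgW M t v a i (fun s => x s i) else 0) := by
    intro x bb
    by_cases hQ : ∀ s, s < t → bb s = a s
    · rw [if_pos hQ, one_mul]
      by_cases hP : ∀ i, p i fun s => x s i
      · rw [if_pos ⟨hP, hQ⟩]
        rw [Finset.prod_comm]
        refine Finset.prod_congr rfl fun i _ => ?_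
        rw [if_pos (hP i)]
        unfold qxgW
        refine Finset.prod_congr rfl fun s _ => ?_
        congr 1
        · by_cases hst : s ≤ t
          · have h1 : 2 * s.val < 2 * t.val + 1 := by
              rw [Fin.le_def] at hst; omega
            rw [if_pos h1, if_pos hst]
            congr 1
            refine prevA_congr' M s fun q hq => hQ q ?_
            rw [Fin.le_def] at hst
            rw [Fin.lt_def]
            omega
          · have h1 : ¬ (2 * s.val < 2 * t.val + 1) := by
              rw [Fin.le_def] at hst; omega
            rw [if_neg h1, if_neg hst]
        · by_cases hst : s < t
          · have h2 : 2 * s.val + 1 < 2 * t.val + 1 := by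
              rw [Fin.lt_def] at hst; omega
            rw [if_pos h2, if_pos hst]
            have harg : bb s i = a s i := by rw [hQ s hst]
            rw [harg]
            refine M.g_adapted i s _ _ _ _ _ (fun q _ => rfl) (fun q hq => ?_)
            refine hQ q ?_
            rw [Fin.lt_def] at hst hq ⊢
            omega
          · have h2 : ¬ (2 * s.val + 1 < 2 * t.val + 1) := by
              rw [Fin.lt_def] at hst; omega
            rw [if_neg h2, if_neg hst]
      · rw [if_neg (fun h => hP h.1)]
        rw [not_forall] at hP
        obtain ⟨i0, h0⟩ := hP
        exact (Finset.prod_eq_zero (Finset.mem_univ i0)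
          (show (if p i0 (fun s => x s i0) then qxgW M t v a i0 (fun s => x s i0) else 0) = 0
            from if_neg h0)).symm
    · rw [if_neg (fun h => hQ h.2), if_neg hQ, zero_mul]
  rw [Finset.sum_congr rfl fun x _ => Finset.sum_congr rfl fun bb _ => hpt x bb]
  have hswap : ∀ x : Fin T → ∀ i, M.X i,
      (∑ bb : Fin T → ∀ j, M.A j, (if (∀ s, s < t → bb s = a s) then (1:ℝ) else 0) *
        ∏ i : Fin N, (if p i (fun s => x s i) then qxgW M t v a i (fun s => x s i) else 0))
      = (∑ bb : Fin T → ∀ j, M.A j, if (∀ s, s < t → bb s = a s) then (1:ℝ) else 0) *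
        ∏ i : Fin N, (if p i (fun s => x s i) then qxgW M t v a i (fun s => x s i) else 0) := by
    intro x
    rw [← Finset.sum_mul]
  rw [Finset.sum_congr rfl fun x _ => hswap x, ← Finset.mul_sum]
  congr 1
  · exact Finset.sum_congr rfl fun bb _ => by congr
  have hite : ∀ x : Fin T → ∀ i, M.X i,
      (∏ i : Fin N, (if p i (fun s => x s i) then qxgW M t v a i (fun s => x s i) else 0)) =
      ∏ i : Fin N, (fun (i : Fin N) (y : Fin T → M.X i) =>
        if p i y then qxgW M t v a i y else 0) i (fun s => x s i) := fun x => rfl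
  refine Eq.trans ?_ (Fintype.prod_sum
    (fun (i : Fin N) (y : Fin T → M.X i) => if p i y then qxgW M t v a i y else 0)).symm
  exact Equiv.sum_comp (Equiv.piComm (fun (i : Fin N) (_ : Fin T) => M.X i)).symm
    (fun F => ∏ i : Fin N, if p i (F i) then qxgW M t v a i (F i) else 0)

lemma Pr_congr' (M : GameModel N T) {E E' : M.Hist → Prop} (h : ∀ ω, E ω ↔ E' ω) :
    M.Pr E = M.Pr E' := by
  classical
  unfold GameModel.Pr
  exact Finset.sum_congr rfl fun ω _ => if_congr (h ω) rfl rfl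

open Classical in
lemma pr_factor (M : GameModel N T) (t : Fin T) (v : M.V) (a : Fin T → ∀ j, M.A j)
    (p : ∀ i, (Fin T → M.X i) → Prop)
    (hp : ∀ i x x', (∀ s : Fin T, s ≤ t → x s = x' s) → (p i x ↔ p i x')) :
    M.Pr (fun ω => (∀ i, p i fun s => ω.2.1 s i) ∧ ω.1 = v ∧ ∀ s, s < t → ω.2.2 s = a s)
      = M.QV v *
        (sumIf (fun bb : Fin T → ∀ j, M.A j => ∀ s, s < t → bb s = a s) (fun _ => (1:ℝ))
          * ∏ i : Fin N, sumIf (p i) (qxgW M t v a i)) := by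
  rw [Pr_eq_elimS M t v a p,
    elimS_tel M t v a p hp (2 * T) (by have := t.isLt; omega),
    elimS_final M t v a p]

lemma qxgW_nonneg (M : GameModel N T) (t : Fin T) (v : M.V) (a : Fin T → ∀ j, M.A j)
    (i : Fin N) (y : Fin T → M.X i) : 0 ≤ qxgW M t v a i y := by
  unfold qxgW
  refine Finset.prod_nonneg fun s _ => mul_nonneg ?_ ?_
  · split_ifs
    · exact M.QX_nonneg _ _ _ _
    · exact inv_nonneg.2 (Nat.cast_nonneg _)
  · split_ifs
    · exact M.g_nonneg _ _ _ _ _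
    · exact inv_nonneg.2 (Nat.cast_nonneg _)

private lemma final_algebra {N : ℕ} (Q : ℝ) (D Nn : Fin N → ℝ) (Mm : Fin N → Fin N → ℝ)
    (hM : ∀ i j, Mm i j = if j = i then Nn j else D j)
    (hQ : 0 < Q * ∏ i, D i) (hQnn : 0 ≤ Q) (hDnn : ∀ i, 0 ≤ D i) :
    (Q * ∏ i, Nn i) / (Q * ∏ i, D i) = ∏ i, (Q * ∏ j, Mm i j) / (Q * ∏ j, D j) := by
  classical
  have hsplit := mul_pos_iff.mp hQ
  have hQpos : 0 < Q := by
    rcases hsplit with ⟨h1, _⟩ | ⟨h1, _⟩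
    · exact h1
    · exact absurd h1 (not_lt.2 hQnn)
  have hPD : 0 < ∏ i, D i := by
    rcases hsplit with ⟨_, h2⟩ | ⟨h1, _⟩
    · exact h2
    · exact absurd h1 (not_lt.2 hQnn)
  have hDpos : ∀ i, 0 < D i := by
    intro i
    refine lt_of_le_of_ne (hDnn i) (Ne.symm fun h0 => ?_)
    rw [Finset.prod_eq_zero (Finset.mem_univ i) h0] at hPD
    exact lt_irrefl 0 hPD
  rw [mul_div_mul_left _ _ hQpos.ne', ← Finset.prod_div_distrib]
  refine Finset.prod_congr rfl fun i _ => ?_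
  rw [mul_div_mul_left _ _ hQpos.ne']
  have hMi : ∏ j, Mm i j = Nn i * ∏ j ∈ Finset.univ.erase i, D j := by
    rw [← Finset.mul_prod_erase Finset.univ _ (Finset.mem_univ i), hM i i, if_pos rfl]
    congr 1
    exact Finset.prod_congr rfl fun j hj => by rw [hM i j, if_neg (Finset.ne_of_mem_erase hj)]
  have hDi : ∏ j, D j = D i * ∏ j ∈ Finset.univ.erase i, D j :=
    (Finset.mul_prod_erase Finset.univ _ (Finset.mem_univ i)).symm
  rw [hMi, hDi]
  exact (mul_div_mul_right _ _
    (Finset.prod_pos fun j _ => hDpos j).ne').symm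

/-- any per-player statistics of the private histories are conditionally
independent given the state of the world and the public action history.  For each
player `i`, `f i` is an arbitrary function of `(X^i_{1:t}, A_{1:t-1})` into a finite
set `B i` (adaptedness is expressed by the hypothesis `hf`: `f i` depends on its
first argument only through indices `s ≤ t` and on its second only through `s < t`),
and `B^i := f i (X^i_{1:t}, A_{1:t-1})`.  Then
`ℙ(B^1 = b^1, …, B^N = b^N | V = v, A_{1:t-1} = a_{1:t-1})
  = ∏_i ℙ(B^i = b^i | V = v, A_{1:t-1} = a_{1:t-1})`. -/
theorem conditional_independence_of_private_statistics
    (M : GameModel N T) (t : Fin T)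
    (B : Fin N → Type) [∀ i, Fintype (B i)]
    (f : ∀ i, (Fin T → M.X i) → (Fin T → ∀ j, M.A j) → B i)
    (hf : ∀ i x x' a a', (∀ s, s ≤ t → x s = x' s) → (∀ s, s < t → a s = a' s) →
      f i x a = f i x' a')
    (v : M.V) (a : Fin T → ∀ j, M.A j)
    (hpos : 0 < M.Pr fun ω => ω.1 = v ∧ ∀ s, s < t → ω.2.2 s = a s)
    (b : ∀ i, B i) :
    M.Pr (fun ω => (∀ i, f i (fun s => ω.2.1 s i) ω.2.2 = b i) ∧
          ω.1 = v ∧ ∀ s, s < t → ω.2.2 s = a s)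
        / M.Pr (fun ω => ω.1 = v ∧ ∀ s, s < t → ω.2.2 s = a s)
      = ∏ i : Fin N,
          M.Pr (fun ω => f i (fun s => ω.2.1 s i) ω.2.2 = b i ∧
              ω.1 = v ∧ ∀ s, s < t → ω.2.2 s = a s)
            / M.Pr (fun ω => ω.1 = v ∧ ∀ s, s < t → ω.2.2 s = a s) := by
  classical
  have hbase : M.Pr (fun ω => ω.1 = v ∧ ∀ s, s < t → ω.2.2 s = a s)
      = M.QV v *
        ((sumIf (fun bb : Fin T → ∀ j, M.A j => ∀ s, s < t → bb s = a s) (fun _ => (1:ℝ)))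
          * ∏ i : Fin N, ∑ y : Fin T → M.X i, qxgW M t v a i y) := by
    have h := pr_factor M t v a (fun _ _ => True) (fun _ _ _ _ => Iff.rfl)
    calc M.Pr (fun ω => ω.1 = v ∧ ∀ s, s < t → ω.2.2 s = a s)
        = M.Pr (fun ω => (∀ _ : Fin N, True) ∧
            ω.1 = v ∧ ∀ s, s < t → ω.2.2 s = a s) := Pr_congr' M (fun ω => by simp)
      _ = _ := h.trans (by
          congr 1
          congr 1
          refine Finset.prod_congr rfl fun i _ => ?_
          unfold sumIf
          exact Finset.sum_congr rfl fun y _ => if_pos trivial)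
  have hnum : M.Pr (fun ω => (∀ i, f i (fun s => ω.2.1 s i) ω.2.2 = b i) ∧
        ω.1 = v ∧ ∀ s, s < t → ω.2.2 s = a s)
      = M.QV v *
        ((sumIf (fun bb : Fin T → ∀ j, M.A j => ∀ s, s < t → bb s = a s) (fun _ => (1:ℝ)))
          * ∏ i : Fin N, sumIf (fun y => f i y a = b i) (qxgW M t v a i)) := by
    calc M.Pr (fun ω => (∀ i, f i (fun s => ω.2.1 s i) ω.2.2 = b i) ∧
          ω.1 = v ∧ ∀ s, s < t → ω.2.2 s = a s)
        = M.Pr (fun ω => (∀ i, (fun y => f i y a = b i) fun s => ω.2.1 s i) ∧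
            ω.1 = v ∧ ∀ s, s < t → ω.2.2 s = a s) := by
          refine Pr_congr' M (fun ω => ?_)
          constructor
          · rintro ⟨h1, hv, ha⟩
            exact ⟨fun i => (hf i _ _ ω.2.2 a (fun _ _ => rfl) ha).symm.trans (h1 i), hv, ha⟩
          · rintro ⟨h1, hv, ha⟩
            exact ⟨fun i => (hf i _ _ ω.2.2 a (fun _ _ => rfl) ha).trans (h1 i), hv, ha⟩
      _ = _ := pr_factor M t v a (fun i y => f i y a = b i)
          (fun i x x' hxx => by
            show (f i x a = b i) ↔ (f i x' a = b i)
            rw [hf i x x' a a hxx (fun _ _ => rfl)])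
  have hnumi : ∀ i0 : Fin N,
      M.Pr (fun ω => f i0 (fun s => ω.2.1 s i0) ω.2.2 = b i0 ∧
          ω.1 = v ∧ ∀ s, s < t → ω.2.2 s = a s)
      = M.QV v *
        ((sumIf (fun bb : Fin T → ∀ j, M.A j => ∀ s, s < t → bb s = a s) (fun _ => (1:ℝ)))
          * ∏ j : Fin N, sumIf (fun y => j = i0 → f j y a = b j) (qxgW M t v a j)) := by
    intro i0
    calc M.Pr (fun ω => f i0 (fun s => ω.2.1 s i0) ω.2.2 = b i0 ∧
          ω.1 = v ∧ ∀ s, s < t → ω.2.2 s = a s)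
        = M.Pr (fun ω => (∀ j, (fun y => j = i0 → f j y a = b j) fun s => ω.2.1 s j) ∧
            ω.1 = v ∧ ∀ s, s < t → ω.2.2 s = a s) := by
          refine Pr_congr' M (fun ω => ?_)
          constructor
          · rintro ⟨h1, hv, ha⟩
            refine ⟨fun j hj => ?_, hv, ha⟩
            subst hj
            exact (hf j _ _ ω.2.2 a (fun _ _ => rfl) ha).symm.trans h1
          · rintro ⟨h1, hv, ha⟩
            exact ⟨(hf i0 _ _ ω.2.2 a (fun _ _ => rfl) ha).trans (h1 i0 rfl), hv, ha⟩
      _ = _ := by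
          exact pr_factor M t v a (fun j y => j = i0 → f j y a = b j)
            (fun j x x' hxx => by
              show (j = i0 → f j x a = b j) ↔ (j = i0 → f j x' a = b j)
              refine imp_congr_right fun _ => ?_
              rw [hf j x x' a a hxx (fun _ _ => rfl)])
  have hprod : (∏ i : Fin N,
      M.Pr (fun ω => f i (fun s => ω.2.1 s i) ω.2.2 = b i ∧
          ω.1 = v ∧ ∀ s, s < t → ω.2.2 s = a s)
        / M.Pr (fun ω => ω.1 = v ∧ ∀ s, s < t → ω.2.2 s = a s))
      = ∏ i0 : Fin N,
          (M.QV v *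
            ((sumIf (fun bb : Fin T → ∀ j, M.A j => ∀ s, s < t → bb s = a s) (fun _ => (1:ℝ)))
              * ∏ j : Fin N, sumIf (fun y => j = i0 → f j y a = b j) (qxgW M t v a j)))
          / (M.QV v *
            ((sumIf (fun bb : Fin T → ∀ j, M.A j => ∀ s, s < t → bb s = a s) (fun _ => (1:ℝ)))
              * ∏ i : Fin N, ∑ y : Fin T → M.X i, qxgW M t v a i y)) :=
    Finset.prod_congr rfl fun i0 _ => by rw [hnumi i0, hbase]
  rw [hprod, hnum, hbase]
  have hKnn : 0 ≤ sumIf (fun bb : Fin T → ∀ j, M.A j => ∀ s, s < t → bb s = a s) (fun _ => (1:ℝ)) := by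
    unfold sumIf
    exact Finset.sum_nonneg fun bb _ => by split_ifs <;> norm_num
  have hQnn : 0 ≤ M.QV v *
      (sumIf (fun bb : Fin T → ∀ j, M.A j => ∀ s, s < t → bb s = a s) (fun _ => (1:ℝ))) :=
    mul_nonneg (M.QV_nonneg v) hKnn
  have hDnn : ∀ i : Fin N, 0 ≤ ∑ y : Fin T → M.X i, qxgW M t v a i y :=
    fun i => Finset.sum_nonneg fun y _ => qxgW_nonneg M t v a i y
  have hQ : 0 < (M.QV v *
        (sumIf (fun bb : Fin T → ∀ j, M.A j => ∀ s, s < t → bb s = a s) (fun _ => (1:ℝ)))) *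
      ∏ i : Fin N, ∑ y : Fin T → M.X i, qxgW M t v a i y := by
    rw [mul_assoc, ← hbase]
    exact hpos
  have hM : ∀ i0 j : Fin N,
      sumIf (fun y => j = i0 → f j y a = b j) (qxgW M t v a j)
      = if j = i0
          then sumIf (fun y => f j y a = b j) (qxgW M t v a j)
          else ∑ y : Fin T → M.X j, qxgW M t v a j y := by
    intro i0 j
    unfold sumIf
    by_cases hj : j = i0
    · rw [if_pos hj]
      refine Finset.sum_congr rfl fun y _ => ?_
      by_cases hy : f j y a = b j
      · rw [if_pos (show j = i0 → f j y a = b j from fun _ => hy), if_pos hy]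
      · rw [if_neg (show ¬ (j = i0 → f j y a = b j) from fun h => hy (h hj)), if_neg hy]
    · rw [if_neg hj]
      refine Finset.sum_congr rfl fun y _ => ?_
      rw [if_pos (fun h => absurd h hj)]
  simp only [← mul_assoc]
  exact final_algebra
    (M.QV v * sumIf (fun bb : Fin T → ∀ j, M.A j => ∀ s, s < t → bb s = a s) (fun _ => (1:ℝ)))
    (fun i => ∑ y : Fin T → M.X i, qxgW M t v a i y)
    (fun i => sumIf (fun y => f i y a = b i) (qxgW M t v a i))
    (fun i0 j => sumIf (fun y => j = i0 → f j y a = b j) (qxgW M t v a j))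
    hM (by rw [mul_assoc] at hQ ⊢; exact hQ) hQnn hDnn
end

section
/- In the finite dynamic game model, player i's belief over the other players' private observation histories is the mixture, under her own belief on the state, of the conditional public distributions of those histories: for every time t and every (x^i_{1:t}, a_{1:t-1}) with ℙ(X^i_{1:t} = x^i_{1:t}, A_{1:t-1} = a_{1:t-1}) > 0 and ℙ(V = v, A_{1:t-1} = a_{1:t-1}) > 0 for every v in the support of ℙ(· | x^i_{1:t}, a_{1:t-1}), one has for every x^{-i}_{1:t}: ℙ(X^{-i}_{1:t} = x^{-i}_{1:t} | x^i_{1:t}, a_{1:t-1}) = Σ_{v ∈ 𝒱} ℙ(X^{-i}_{1:t} = x^{-i}_{1:t} | V = v, A_{1:t-1} = a_{1:t-1}) · ℙ(V = v | x^i_{1:t}, a_{1:t-1}); here X^{-i}_{1:t} denotes the observation histories of all players other than i. -/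
open Finset

variable {N T : ℕ}

namespace GameModel

variable {N T : ℕ} (M : GameModel N T)

lemma ite_inst {c c' : Prop} (h : c = c') {i1 : Decidable c} {i2 : Decidable c'} (x y : ℝ) :
    @ite _ c i1 x y = @ite _ c' i2 x y := by
  subst h
  rw [Subsingleton.elim i1 i2]

lemma jointP_nonneg (ω : M.Hist) : 0 ≤ M.jointP ω := by
  unfold jointP
  refine mul_nonneg (M.QV_nonneg _) ?_
  refine Finset.prod_nonneg fun s _ => Finset.prod_nonneg fun j _ => ?_
  exact mul_nonneg (M.QX_nonneg _ _ _ _) (M.g_nonneg _ _ _ _ _)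

lemma Pr_nonneg (E : M.Hist → Prop) : 0 ≤ M.Pr E := by
  unfold Pr
  refine Finset.sum_nonneg fun ω _ => ?_
  split
  · exact M.jointP_nonneg ω
  · exact le_rfl

lemma Pr_mono {E E' : M.Hist → Prop} (h : ∀ ω, E ω → E' ω) : M.Pr E ≤ M.Pr E' := by
  unfold Pr
  refine Finset.sum_le_sum fun ω _ => ?_
  by_cases hE : E ω
  · rw [if_pos hE, if_pos (h ω hE)]
  · rw [if_neg hE]
    split
    · exact M.jointP_nonneg ω
    · exact le_rfl

lemma Pr_congr {E E' : M.Hist → Prop} (h : ∀ ω, E ω ↔ E' ω) : M.Pr E = M.Pr E' := by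
  have : E = E' := funext fun ω => propext (h ω)
  rw [this]

lemma Pr_eq_zero_of_le {E E' : M.Hist → Prop} (h : ∀ ω, E ω → E' ω)
    (h0 : M.Pr E' = 0) : M.Pr E = 0 :=
  le_antisymm (h0 ▸ M.Pr_mono h) (M.Pr_nonneg E)

lemma Pr_split_v (E : M.Hist → Prop) :
    M.Pr E = ∑ v : M.V, M.Pr fun ω => ω.1 = v ∧ E ω := by
  classical
  have key : ∀ ω : M.Hist, (if E ω then M.jointP ω else 0)
      = ∑ v : M.V, if ω.1 = v ∧ E ω then M.jointP ω else 0 := by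
    intro ω
    by_cases hE : E ω
    · rw [if_pos hE, Finset.sum_eq_single ω.1]
      · rw [if_pos ⟨rfl, hE⟩]
      · intro v _ hv
        rw [if_neg]
        rintro ⟨h1, -⟩
        exact hv h1.symm
      · intro h
        exact absurd (Finset.mem_univ _) h
    · rw [if_neg hE, Finset.sum_eq_zero]
      intro v _
      rw [if_neg]
      rintro ⟨-, h⟩
      exact hE h
  unfold Pr
  rw [Finset.sum_congr rfl fun ω _ => key ω, Finset.sum_comm]
  exact Finset.sum_congr rfl fun v _ => Finset.sum_congr rfl fun ω _ =>
    ite_inst rfl _ _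

open Classical in
lemma sum_update {ι β : Type*} [Fintype ι] [DecidableEq ι] [Fintype β]
    (p : ι) (d : β) (f : (ι → β) → ℝ) :
    ∑ h : ι → β, f h
      = ∑ h : ι → β, ∑ b : β, if h p = d then f (Function.update h p b) else 0 := by
  classical
  have h1 : (∑ q : (ι → β) × β, if q.1 p = d then f (Function.update q.1 p q.2) else 0)
      = ∑ h : ι → β, ∑ b : β, if h p = d then f (Function.update h p b) else 0 :=
    Fintype.sum_prod_type _
  rw [← h1, ← Finset.sum_filter]
  symm
  refine Finset.sum_bij' (fun q _ => Function.update q.1 p q.2)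
    (fun h _ => (Function.update h p d, h p)) (fun _ _ => Finset.mem_univ _)
    (fun h _ => by simp) ?_ ?_ (fun _ _ => rfl)
  · intro q hq
    simp only [Finset.mem_filter, Finset.mem_univ, true_and] at hq
    show (Function.update (Function.update q.1 p q.2) p d, Function.update q.1 p q.2 p) = q
    rw [Function.update_idem, Function.update_self, ← hq, Function.update_eq_self]
  · intro h _
    show Function.update (Function.update h p d) p (h p) = h
    rw [Function.update_idem, Function.update_eq_self]

lemma sum_prod_pi {ι : Type*} [Fintype ι] [DecidableEq ι] (β : ι → Type*)
    [∀ j, Fintype (β j)] (f : ∀ j, β j → ℝ) :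
    (∑ b : ∀ j, β j, ∏ j, f j (b j)) = ∏ j, ∑ y : β j, f j y := by
  rw [← Fintype.piFinset_univ, ← Finset.prod_univ_sum]

end GameModel

namespace GameModel

/-- The public action history: `a s` for `s < t`, the dummy profile afterwards. -/
def astar (M : GameModel N T) (t : Fin T) (a : Fin T → ∀ j, M.A j) :
    Fin T → ∀ j, M.A j :=
  fun s => if s.val < t.val then a s else M.a0

/-- Truncated weight: kernels up to time `kx` (exclusive), strategies up to `ka`. -/
noncomputable def Wf (M : GameModel N T) (v : M.V) (kx ka : ℕ)
    (xs : Fin T → ∀ j, M.X j) (as : Fin T → ∀ j, M.A j) : ℝ :=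
  M.QV v * ∏ s : Fin T, ∏ j,
    (if s.val < kx then M.QX j (xs s j) v (M.prevA as s) else 1) *
      (if s.val < ka then M.g j s (as s j) (fun u => xs u j) as else 1)

open Classical in
/-- Partially marginalized sum: trajectories frozen after `kx` (observations)
resp. `ka` (actions), weighted by the truncated weight. -/
noncomputable def Rsum (M : GameModel N T) (v : M.V) (x0 : ∀ j, M.X j)
    (D : (Fin T → ∀ j, M.X j) → (Fin T → ∀ j, M.A j) → Prop) (kx ka : ℕ) : ℝ :=
  ∑ xs : Fin T → ∀ j, M.X j, ∑ as : Fin T → ∀ j, M.A j,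
    if D xs as ∧ (∀ s : Fin T, kx ≤ s.val → xs s = x0) ∧
        (∀ s : Fin T, ka ≤ s.val → as s = M.a0)
    then M.Wf v kx ka xs as else 0

variable (M : GameModel N T)

open Classical in
lemma Rsum_top (v : M.V) (x0 : ∀ j, M.X j)
    (D : (Fin T → ∀ j, M.X j) → (Fin T → ∀ j, M.A j) → Prop) :
    (∑ xs : Fin T → ∀ j, M.X j, ∑ as : Fin T → ∀ j, M.A j,
      if D xs as then M.jointP (v, xs, as) else 0) = M.Rsum v x0 D T T := by
  classical
  unfold Rsum
  refine Finset.sum_congr rfl fun xs _ => Finset.sum_congr rfl fun as _ => ?_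
  have hW : M.Wf v T T xs as = M.jointP (v, xs, as) := by
    unfold Wf jointP
    exact congrArg (M.QV v * ·) (Finset.prod_congr rfl fun s _ =>
      Finset.prod_congr rfl fun j _ => by rw [if_pos s.isLt, if_pos s.isLt])
  have hC : (D xs as ∧ (∀ s : Fin T, T ≤ s.val → xs s = x0) ∧
      (∀ s : Fin T, T ≤ s.val → as s = M.a0)) ↔ D xs as :=
    ⟨fun h => h.1, fun h => ⟨h, fun s hs => absurd hs (Nat.not_le.mpr s.isLt),
      fun s hs => absurd hs (Nat.not_le.mpr s.isLt)⟩⟩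
  rw [hW]
  by_cases hD : D xs as
  · rw [if_pos hD, if_pos (hC.mpr hD)]
  · rw [if_neg hD, if_neg (fun h => hD (hC.mp h))]

open Classical in
lemma Pr_eq_sum (v : M.V)
    (D : (Fin T → ∀ j, M.X j) → (Fin T → ∀ j, M.A j) → Prop) :
    M.Pr (fun ω => ω.1 = v ∧ D ω.2.1 ω.2.2)
      = ∑ xs : Fin T → ∀ j, M.X j, ∑ as : Fin T → ∀ j, M.A j,
          if D xs as then M.jointP (v, xs, as) else 0 := by
  unfold Pr
  rw [Fintype.sum_prod_type]
  dsimp only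
  rw [Finset.sum_eq_single v]
  · rw [Fintype.sum_prod_type]
    dsimp only
    refine Finset.sum_congr rfl fun xs _ => Finset.sum_congr rfl fun as _ => ?_
    by_cases hD : D xs as
    · rw [if_pos ⟨rfl, hD⟩, if_pos hD]
    · rw [if_neg (fun h => hD h.2), if_neg hD]
  · intro w _ hw
    refine Finset.sum_eq_zero fun p _ => ?_
    rw [if_neg]
    rintro ⟨h, -⟩
    exact hw h
  · intro h
    exact absurd (Finset.mem_univ _) h

end GameModel

namespace GameModel

variable {N T : ℕ} (M : GameModel N T)

open Classical in
lemma stepA (v : M.V) (x0 : ∀ j, M.X j) (tv : ℕ)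
    (D : (Fin T → ∀ j, M.X j) → (Fin T → ∀ j, M.A j) → Prop)
    (hD : ∀ xs as as', (∀ s : Fin T, s.val < tv → as s = as' s) → (D xs as ↔ D xs as'))
    (k : ℕ) (hk1 : tv ≤ k) (hk2 : k < T) :
    M.Rsum v x0 D (k+1) (k+1) = M.Rsum v x0 D (k+1) k := by
  obtain ⟨pk, hpkv⟩ : ∃ pk : Fin T, pk.val = k := ⟨⟨k, hk2⟩, rfl⟩
  unfold Rsum
  refine Finset.sum_congr rfl fun xs _ => ?_
  rw [sum_update pk M.a0]
  refine Finset.sum_congr rfl fun as _ => ?_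
  by_cases hfr : as pk = M.a0
  · have hupd : ∀ (b : ∀ j, M.A j) (s : Fin T), s ≠ pk →
        Function.update as pk b s = as s :=
      fun b s hs => Function.update_of_ne hs _ _
    have hcond : ∀ b : ∀ j, M.A j,
        (D xs (Function.update as pk b) ∧ (∀ s : Fin T, k+1 ≤ s.val → xs s = x0) ∧
          (∀ s : Fin T, k+1 ≤ s.val → Function.update as pk b s = M.a0))
        ↔ (D xs as ∧ (∀ s : Fin T, k+1 ≤ s.val → xs s = x0) ∧
          (∀ s : Fin T, k ≤ s.val → as s = M.a0)) := by
      intro b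
      have hDb : D xs (Function.update as pk b) ↔ D xs as :=
        hD xs _ _ (fun s hs => hupd b s (fun h => by rw [h, hpkv] at hs; omega))
      constructor
      · rintro ⟨h1, h2, h3⟩
        refine ⟨hDb.mp h1, h2, fun s hs => ?_⟩
        rcases eq_or_lt_of_le hs with heq | hlt
        · have hsp : s = pk := Fin.val_injective (by omega)
          rw [hsp]; exact hfr
        · have hs' : s ≠ pk := fun h => by rw [h, hpkv] at hlt; omega
          rw [← hupd b s hs']; exact h3 s hlt
      · rintro ⟨h1, h2, h3⟩
        refine ⟨hDb.mpr h1, h2, fun s hs => ?_⟩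
        have hs' : s ≠ pk := fun h => by rw [h, hpkv] at hs; omega
        rw [hupd b s hs']
        exact h3 s (by omega)
    by_cases hc : D xs as ∧ (∀ s : Fin T, k+1 ≤ s.val → xs s = x0) ∧
        (∀ s : Fin T, k ≤ s.val → as s = M.a0)
    · rw [if_pos hc]
      have hprevA : ∀ (b : ∀ j, M.A j) (s : Fin T), s.val < k + 1 →
          M.prevA (Function.update as pk b) s = M.prevA as s := by
        intro b s hs
        unfold prevA
        by_cases h0 : (s : ℕ) = 0
        · rw [if_pos h0, if_pos h0]
        · rw [if_neg h0, if_neg h0, hupd b _ (fun h => by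
            have hh := congrArg Fin.val h
            simp only [hpkv] at hh
            omega)]
      have hgad : ∀ (b : ∀ j, M.A j) (j) (s : Fin T), s.val ≤ k → ∀ c,
          M.g j s c (fun u => xs u j) (Function.update as pk b)
            = M.g j s c (fun u => xs u j) as :=
        fun b j s hs c => M.g_adapted j s c _ _ _ _ (fun u _ => rfl)
          (fun u hu => hupd b u (fun h =>
            absurd (Fin.lt_def.mp (h ▸ hu)) (by omega)))
      have hterm : ∀ b : ∀ j, M.A j,
          M.Wf v (k+1) (k+1) xs (Function.update as pk b)
            = (∏ j, M.g j pk (b j) (fun u => xs u j) as) * M.Wf v (k+1) k xs as := by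
        intro b
        unfold Wf
        have e1 : ∀ s : Fin T,
            (∏ j, (if s.val < k+1 then
                M.QX j (xs s j) v (M.prevA (Function.update as pk b) s) else 1) *
              (if s.val < k+1 then M.g j s (Function.update as pk b s j)
                (fun u => xs u j) (Function.update as pk b) else 1))
            = (if s = pk then ∏ j, M.g j pk (b j) (fun u => xs u j) as else 1) *
              ∏ j, (if s.val < k+1 then M.QX j (xs s j) v (M.prevA as s) else 1) *
                (if s.val < k then M.g j s (as s j) (fun u => xs u j) as else 1) := by
          intro s
          by_cases hspk : s = pk
          · subst hspk
            rw [if_pos rfl]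
            calc (∏ j, (if s.val < k+1 then
                    M.QX j (xs s j) v (M.prevA (Function.update as s b) s) else 1) *
                  (if s.val < k+1 then M.g j s (Function.update as s b s j)
                    (fun u => xs u j) (Function.update as s b) else 1))
                = ∏ j, M.QX j (xs s j) v (M.prevA as s) *
                    M.g j s (b j) (fun u => xs u j) as := by
                  refine Finset.prod_congr rfl fun j _ => ?_
                  rw [if_pos (by omega), if_pos (by omega), hprevA b s (by omega),
                    Function.update_self, hgad b j s (by omega)]
              _ = (∏ j, M.g j s (b j) (fun u => xs u j) as) *
                    ∏ j, M.QX j (xs s j) v (M.prevA as s) := by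
                  rw [Finset.prod_mul_distrib, mul_comm]
              _ = (∏ j, M.g j s (b j) (fun u => xs u j) as) *
                    ∏ j, (if s.val < k+1 then M.QX j (xs s j) v (M.prevA as s) else 1) *
                      (if s.val < k then M.g j s (as s j) (fun u => xs u j) as else 1) := by
                  refine congrArg _ (Finset.prod_congr rfl fun j _ => ?_)
                  rw [if_pos (by omega), if_neg (by omega), mul_one]
          · rw [if_neg hspk, one_mul]
            have hsk : s.val ≠ k := fun h => hspk (Fin.val_injective (by omega))
            refine Finset.prod_congr rfl fun j _ => ?_
            by_cases h1 : s.val < k+1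
            · have h2 : s.val < k := by omega
              congr 1
              · rw [if_pos h1, if_pos h1, hprevA b s h1]
              · rw [if_pos h1, if_pos h2, congrFun (hupd b s hspk) j,
                  hgad b j s (by omega)]
            · congr 1
              · rw [if_neg h1, if_neg h1]
              · rw [if_neg h1, if_neg (by omega : ¬ s.val < k)]
        rw [Finset.prod_congr rfl fun s _ => e1 s, Finset.prod_mul_distrib,
          Finset.prod_ite_eq' Finset.univ pk
            (fun _ => ∏ j, M.g j pk (b j) (fun u => xs u j) as),
          if_pos (Finset.mem_univ pk)]
        ring
      have hgsum : (∑ b : ∀ j, M.A j, ∏ j, M.g j pk (b j) (fun u => xs u j) as) = 1 :=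
        (sum_prod_pi (fun j => M.A j)
          (fun j y => M.g j pk y (fun u => xs u j) as)).trans
          (Finset.prod_eq_one fun j _ => M.g_sum j pk _ as)
      trans (∑ b : ∀ j, M.A j,
          (∏ j, M.g j pk (b j) (fun u => xs u j) as) * M.Wf v (k+1) k xs as)
      · refine Finset.sum_congr rfl fun b _ => ?_
        rw [if_pos hfr]
        beta_reduce
        rw [if_pos ((hcond b).mpr hc), hterm b]
      · rw [← Finset.sum_mul, hgsum, one_mul]
    · rw [if_neg hc]
      refine Finset.sum_eq_zero fun b _ => ?_
      rw [if_pos hfr]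
      beta_reduce
      rw [if_neg (fun h => hc ((hcond b).mp h))]
  · rw [if_neg (fun h : _ ∧ _ ∧ (∀ s : Fin T, k ≤ s.val → as s = M.a0) =>
      hfr (h.2.2 pk (by omega)))]
    exact Finset.sum_eq_zero fun b _ => if_neg hfr

end GameModel

namespace GameModel

variable {N T : ℕ} (M : GameModel N T)

open Classical in
lemma stepB (v : M.V) (x0 : ∀ j, M.X j) (tv : ℕ)
    (D : (Fin T → ∀ j, M.X j) → (Fin T → ∀ j, M.A j) → Prop)
    (hD : ∀ xs xs' as, (∀ s : Fin T, s.val ≤ tv → xs s = xs' s) → (D xs as ↔ D xs' as))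
    (k : ℕ) (hk1 : tv < k) (hk2 : k < T) :
    M.Rsum v x0 D (k+1) k = M.Rsum v x0 D k k := by
  obtain ⟨pk, hpkv⟩ : ∃ pk : Fin T, pk.val = k := ⟨⟨k, hk2⟩, rfl⟩
  unfold Rsum
  rw [Finset.sum_comm]
  conv_rhs => rw [Finset.sum_comm]
  refine Finset.sum_congr rfl fun as _ => ?_
  rw [sum_update pk x0]
  refine Finset.sum_congr rfl fun xs _ => ?_
  by_cases hfr : xs pk = x0
  · have hupd : ∀ (b : ∀ j, M.X j) (s : Fin T), s ≠ pk →
        Function.update xs pk b s = xs s :=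
      fun b s hs => Function.update_of_ne hs _ _
    have hcond : ∀ b : ∀ j, M.X j,
        (D (Function.update xs pk b) as ∧
          (∀ s : Fin T, k+1 ≤ s.val → Function.update xs pk b s = x0) ∧
          (∀ s : Fin T, k ≤ s.val → as s = M.a0))
        ↔ (D xs as ∧ (∀ s : Fin T, k ≤ s.val → xs s = x0) ∧
          (∀ s : Fin T, k ≤ s.val → as s = M.a0)) := by
      intro b
      have hDb : D (Function.update xs pk b) as ↔ D xs as :=
        hD _ _ as (fun s hs => hupd b s (fun h => by rw [h, hpkv] at hs; omega))
      constructor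
      · rintro ⟨h1, h2, h3⟩
        refine ⟨hDb.mp h1, fun s hs => ?_, h3⟩
        rcases eq_or_lt_of_le hs with heq | hlt
        · have hsp : s = pk := Fin.val_injective (by omega)
          rw [hsp]; exact hfr
        · have hs' : s ≠ pk := fun h => by rw [h, hpkv] at hlt; omega
          rw [← hupd b s hs']; exact h2 s hlt
      · rintro ⟨h1, h2, h3⟩
        refine ⟨hDb.mpr h1, fun s hs => ?_, h3⟩
        have hs' : s ≠ pk := fun h => by rw [h, hpkv] at hs; omega
        rw [hupd b s hs']
        exact h2 s (by omega)
    by_cases hc : D xs as ∧ (∀ s : Fin T, k ≤ s.val → xs s = x0) ∧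
        (∀ s : Fin T, k ≤ s.val → as s = M.a0)
    · rw [if_pos hc]
      have hgad : ∀ (b : ∀ j, M.X j) (j) (s : Fin T), s.val < k →
          M.g j s (as s j) (fun u => Function.update xs pk b u j) as
            = M.g j s (as s j) (fun u => xs u j) as :=
        fun b j s hs => M.g_adapted j s _ _ _ _ _
          (fun u hu => congrFun (hupd b u (fun h =>
            absurd (Fin.le_def.mp (h ▸ hu)) (by omega))) j)
          (fun u _ => rfl)
      have hterm : ∀ b : ∀ j, M.X j,
          M.Wf v (k+1) k (Function.update xs pk b) as
            = (∏ j, M.QX j (b j) v (M.prevA as pk)) * M.Wf v k k xs as := by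
        intro b
        unfold Wf
        have e1 : ∀ s : Fin T,
            (∏ j, (if s.val < k+1 then
                M.QX j (Function.update xs pk b s j) v (M.prevA as s) else 1) *
              (if s.val < k then M.g j s (as s j)
                (fun u => Function.update xs pk b u j) as else 1))
            = (if s = pk then ∏ j, M.QX j (b j) v (M.prevA as pk) else 1) *
              ∏ j, (if s.val < k then M.QX j (xs s j) v (M.prevA as s) else 1) *
                (if s.val < k then M.g j s (as s j) (fun u => xs u j) as else 1) := by
          intro s
          by_cases hspk : s = pk
          · subst hspk
            rw [if_pos rfl]
            have h2 : (∏ j, (if s.val < k then M.QX j (xs s j) v (M.prevA as s) else 1) *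
                (if s.val < k then M.g j s (as s j) (fun u => xs u j) as else 1)) = 1 :=
              Finset.prod_eq_one fun j _ => by
                rw [if_neg (by omega), if_neg (by omega), mul_one]
            rw [h2, mul_one]
            refine Finset.prod_congr rfl fun j _ => ?_
            rw [if_pos (by omega), if_neg (by omega), Function.update_self, mul_one]
          · rw [if_neg hspk, one_mul]
            have hsk : s.val ≠ k := fun h => hspk (Fin.val_injective (by omega))
            refine Finset.prod_congr rfl fun j _ => ?_
            by_cases h2 : s.val < k
            · congr 1
              · rw [if_pos (by omega), if_pos h2, congrFun (hupd b s hspk) j]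
              · rw [if_pos h2, if_pos h2, hgad b j s h2]
            · congr 1
              · rw [if_neg (by omega : ¬ s.val < k+1), if_neg h2]
              · rw [if_neg h2, if_neg h2]
        rw [Finset.prod_congr rfl fun s _ => e1 s, Finset.prod_mul_distrib,
          Finset.prod_ite_eq' Finset.univ pk
            (fun _ => ∏ j, M.QX j (b j) v (M.prevA as pk)),
          if_pos (Finset.mem_univ pk)]
        ring
      have hxsum : (∑ b : ∀ j, M.X j, ∏ j, M.QX j (b j) v (M.prevA as pk)) = 1 :=
        (sum_prod_pi (fun j => M.X j)
          (fun j y => M.QX j y v (M.prevA as pk))).trans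
          (Finset.prod_eq_one fun j _ => M.QX_sum j v _)
      trans (∑ b : ∀ j, M.X j,
          (∏ j, M.QX j (b j) v (M.prevA as pk)) * M.Wf v k k xs as)
      · refine Finset.sum_congr rfl fun b _ => ?_
        rw [if_pos hfr]
        beta_reduce
        rw [if_pos ((hcond b).mpr hc), hterm b]
      · rw [← Finset.sum_mul, hxsum, one_mul]
    · rw [if_neg hc]
      refine Finset.sum_eq_zero fun b _ => ?_
      rw [if_pos hfr]
      beta_reduce
      rw [if_neg (fun h => hc ((hcond b).mp h))]
  · rw [if_neg (fun h : _ ∧ (∀ s : Fin T, k ≤ s.val → xs s = x0) ∧ _ =>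
      hfr (h.2.1 pk (by omega)))]
    exact Finset.sum_eq_zero fun b _ => if_neg hfr

end GameModel

namespace GameModel

variable {N T : ℕ} (M : GameModel N T)

lemma Rchain (v : M.V) (x0 : ∀ j, M.X j) (tv : ℕ)
    (D : (Fin T → ∀ j, M.X j) → (Fin T → ∀ j, M.A j) → Prop)
    (hD : ∀ xs xs' as as', (∀ s : Fin T, s.val ≤ tv → xs s = xs' s) →
      (∀ s : Fin T, s.val < tv → as s = as' s) → (D xs as ↔ D xs' as'))
    (htv : tv < T) :
    M.Rsum v x0 D T T = M.Rsum v x0 D (tv+1) tv := by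
  have hDa : ∀ xs as as', (∀ s : Fin T, s.val < tv → as s = as' s) →
      (D xs as ↔ D xs as') :=
    fun xs as as' h => hD xs xs as as' (fun _ _ => rfl) h
  have hDx : ∀ xs xs' as, (∀ s : Fin T, s.val ≤ tv → xs s = xs' s) →
      (D xs as ↔ D xs' as) :=
    fun xs xs' as h => hD xs xs' as as h (fun _ _ => rfl)
  have main : ∀ k, tv ≤ k → k < T →
      M.Rsum v x0 D (k+1) k = M.Rsum v x0 D (tv+1) tv := by
    intro k hk
    induction k, hk using Nat.le_induction with
    | base => intro _; rfl
    | succ n hn ih =>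
      intro hnT
      rw [M.stepB v x0 tv D hDx (n+1) (by omega) hnT,
        M.stepA v x0 tv D hDa n hn (by omega), ih (by omega)]
  obtain ⟨m, rfl⟩ : ∃ m, T = m + 1 := ⟨T - 1, by omega⟩
  rw [M.stepA v x0 tv D hDa m (by omega) (by omega)]
  exact main m (by omega) (by omega)

end GameModel

namespace GameModel

variable {N T : ℕ}

/-- Per-player weight of a private observation history given the state and
the public action history. -/
noncomputable def wfun (M : GameModel N T) (v : M.V) (t : Fin T)
    (a : Fin T → ∀ j, M.A j) (j : Fin N) (ξ : Fin T → M.X j) : ℝ :=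
  ∏ s : Fin T,
    (if s.val < t.val + 1 then M.QX j (ξ s) v (M.prevA (M.astar t a) s) else 1) *
      (if s.val < t.val then M.g j s (M.astar t a s j) ξ (M.astar t a) else 1)

open Classical in
/-- Per-player sum of weights over histories compatible with the constraint. -/
noncomputable def Ssum (M : GameModel N T) (v : M.V) (t : Fin T)
    (a : Fin T → ∀ j, M.A j) (x0 : ∀ j, M.X j) (P : Finset (Fin N))
    (y : ∀ j, Fin T → M.X j) (j : Fin N) : ℝ :=
  ∑ ξ : Fin T → M.X j,
    if ((j ∈ P → ∀ s : Fin T, s ≤ t → ξ s = y j s) ∧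
        (∀ s : Fin T, t.val + 1 ≤ s.val → ξ s = x0 j))
    then M.wfun v t a j ξ else 0

variable (M : GameModel N T)

lemma astar_lt (t : Fin T) (a : Fin T → ∀ j, M.A j) :
    ∀ s : Fin T, s < t → M.astar t a s = a s := by
  intro s hs
  unfold astar
  rw [if_pos (Fin.lt_def.mp hs)]

lemma astar_ge (t : Fin T) (a : Fin T → ∀ j, M.A j) :
    ∀ s : Fin T, t.val ≤ s.val → M.astar t a s = M.a0 := by
  intro s hs
  unfold astar
  rw [if_neg (by omega)]

open Classical in
lemma Rsum_final (v : M.V) (t : Fin T) (a : Fin T → ∀ j, M.A j)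
    (x0 : ∀ j, M.X j) (P : Finset (Fin N)) (y : ∀ j, Fin T → M.X j) :
    M.Rsum v x0 (fun xs as => (∀ j ∈ P, ∀ s : Fin T, s ≤ t → xs s j = y j s) ∧
        (∀ s : Fin T, s < t → as s = a s)) (t.val+1) t.val
      = M.QV v * ∏ j, M.Ssum v t a x0 P y j := by
  have hAiff : ∀ as : Fin T → ∀ j, M.A j,
      ((∀ s : Fin T, s < t → as s = a s) ∧
        (∀ s : Fin T, t.val ≤ s.val → as s = M.a0)) ↔ as = M.astar t a := by
    intro as
    constructor
    · rintro ⟨h1, h2⟩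
      funext s
      by_cases hs : s.val < t.val
      · rw [h1 s (Fin.lt_def.mpr hs), M.astar_lt t a s (Fin.lt_def.mpr hs)]
      · rw [h2 s (by omega), M.astar_ge t a s (by omega)]
    · rintro rfl
      exact ⟨M.astar_lt t a, M.astar_ge t a⟩
  unfold Rsum
  beta_reduce
  have step1 : ∀ xs : Fin T → ∀ j, M.X j,
      (∑ as : Fin T → ∀ j, M.A j,
        if ((∀ j ∈ P, ∀ s : Fin T, s ≤ t → xs s j = y j s) ∧
              (∀ s : Fin T, s < t → as s = a s)) ∧
            (∀ s : Fin T, t.val+1 ≤ s.val → xs s = x0) ∧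
            (∀ s : Fin T, t.val ≤ s.val → as s = M.a0)
        then M.Wf v (t.val+1) t.val xs as else 0)
      = if ((∀ j ∈ P, ∀ s : Fin T, s ≤ t → xs s j = y j s) ∧
            (∀ s : Fin T, t.val+1 ≤ s.val → xs s = x0))
        then M.Wf v (t.val+1) t.val xs (M.astar t a) else 0 := by
    intro xs
    rw [Finset.sum_eq_single (M.astar t a)]
    · by_cases hq : (∀ j ∈ P, ∀ s : Fin T, s ≤ t → xs s j = y j s) ∧
          (∀ s : Fin T, t.val+1 ≤ s.val → xs s = x0)
      · rw [if_pos ⟨⟨hq.1, M.astar_lt t a⟩, hq.2, M.astar_ge t a⟩, if_pos hq]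
      · rw [if_neg, if_neg hq]
        rintro ⟨⟨hh1, -⟩, hh2, -⟩
        exact hq ⟨hh1, hh2⟩
    · intro as _ hne
      rw [if_neg]
      rintro ⟨⟨-, h1⟩, -, h2⟩
      exact hne ((hAiff as).mp ⟨h1, h2⟩)
    · intro h
      exact absurd (Finset.mem_univ _) h
  trans (∑ xs : Fin T → ∀ j, M.X j, ∑ as : Fin T → ∀ j, M.A j,
      if ((∀ j ∈ P, ∀ s : Fin T, s ≤ t → xs s j = y j s) ∧
            (∀ s : Fin T, s < t → as s = a s)) ∧
          (∀ s : Fin T, t.val+1 ≤ s.val → xs s = x0) ∧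
          (∀ s : Fin T, t.val ≤ s.val → as s = M.a0)
      then M.Wf v (t.val+1) t.val xs as else 0)
  · exact Finset.sum_congr rfl fun xs _ => Finset.sum_congr rfl fun as _ =>
      ite_inst rfl _ _
  trans (∑ xs : Fin T → ∀ j, M.X j,
      if ((∀ j ∈ P, ∀ s : Fin T, s ≤ t → xs s j = y j s) ∧
          (∀ s : Fin T, t.val+1 ≤ s.val → xs s = x0))
      then M.Wf v (t.val+1) t.val xs (M.astar t a) else 0)
  · exact Finset.sum_congr rfl fun xs _ => step1 xs
  have step2 : ∀ xs : Fin T → ∀ j, M.X j,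
      (if ((∀ j ∈ P, ∀ s : Fin T, s ≤ t → xs s j = y j s) ∧
            (∀ s : Fin T, t.val+1 ≤ s.val → xs s = x0))
        then M.Wf v (t.val+1) t.val xs (M.astar t a) else 0)
      = M.QV v * ∏ j,
          (if ((j ∈ P → ∀ s : Fin T, s ≤ t → xs s j = y j s) ∧
              (∀ s : Fin T, t.val+1 ≤ s.val → xs s j = x0 j))
          then M.wfun v t a j (fun s => xs s j) else 0) := by
    intro xs
    by_cases hq : ∀ j, ((j ∈ P → ∀ s : Fin T, s ≤ t → xs s j = y j s) ∧
        (∀ s : Fin T, t.val+1 ≤ s.val → xs s j = x0 j))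
    · have hQ : (∀ j ∈ P, ∀ s : Fin T, s ≤ t → xs s j = y j s) ∧
          (∀ s : Fin T, t.val+1 ≤ s.val → xs s = x0) :=
        ⟨fun j hj s hs => (hq j).1 hj s hs, fun s hs => funext fun j => (hq j).2 s hs⟩
      rw [if_pos hQ, Finset.prod_congr rfl fun j _ => if_pos (hq j)]
      unfold Wf wfun
      rw [Finset.prod_comm]
    · obtain ⟨j0, hj0⟩ := not_forall.mp hq
      rw [if_neg (fun h => hq (fun j => ⟨fun hj s hs => h.1 j hj s hs,
          fun s hs => congrFun (h.2 s hs) j⟩))]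
      have hz : (∏ j, (if ((j ∈ P → ∀ s : Fin T, s ≤ t → xs s j = y j s) ∧
          (∀ s : Fin T, t.val+1 ≤ s.val → xs s j = x0 j))
          then M.wfun v t a j (fun s => xs s j) else 0)) = (0:ℝ) :=
        Finset.prod_eq_zero (Finset.mem_univ j0) (if_neg hj0)
      rw [hz, mul_zero]
  trans (∑ xs : Fin T → ∀ j, M.X j, M.QV v * ∏ j,
      (if ((j ∈ P → ∀ s : Fin T, s ≤ t → xs s j = y j s) ∧
          (∀ s : Fin T, t.val+1 ≤ s.val → xs s j = x0 j))
      then M.wfun v t a j (fun s => xs s j) else 0))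
  · exact Finset.sum_congr rfl fun xs _ => step2 xs
  rw [← Finset.mul_sum]
  congr 1
  refine Eq.trans (Fintype.sum_equiv
    (Equiv.piComm fun (_ : Fin T) (j : Fin N) => M.X j) _
    (fun ζ => ∏ j, if ((j ∈ P → ∀ s : Fin T, s ≤ t → ζ j s = y j s) ∧
        (∀ s : Fin T, t.val+1 ≤ s.val → ζ j s = x0 j))
      then M.wfun v t a j (ζ j) else 0) (fun xs => rfl)) ?_
  refine Eq.trans (sum_prod_pi (fun j => Fin T → M.X j)
    (fun j ξ => if ((j ∈ P → ∀ s : Fin T, s ≤ t → ξ s = y j s) ∧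
        (∀ s : Fin T, t.val+1 ≤ s.val → ξ s = x0 j))
      then M.wfun v t a j ξ else 0)) ?_
  rfl

end GameModel

namespace GameModel

variable {N T : ℕ} (M : GameModel N T)

lemma ite_cond_congr {c c' : Prop} (h : c ↔ c') {i1 : Decidable c}
    {i2 : Decidable c'} (x y : ℝ) : @ite _ c i1 x y = @ite _ c' i2 x y := by
  by_cases hc : c
  · rw [if_pos hc, if_pos (h.mp hc)]
  · rw [if_neg hc, if_neg (fun hc' => hc (h.mpr hc'))]

lemma Ssum_congr (v : M.V) (t : Fin T) (a : Fin T → ∀ j, M.A j)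
    (x0 : ∀ j, M.X j) {P P' : Finset (Fin N)} (y : ∀ j, Fin T → M.X j)
    (j : Fin N) (h : (j ∈ P) ↔ (j ∈ P')) :
    M.Ssum v t a x0 P y j = M.Ssum v t a x0 P' y j := by
  unfold Ssum
  exact Finset.sum_congr rfl fun ξ _ =>
    ite_cond_congr (and_congr (imp_congr h Iff.rfl) Iff.rfl) _ _

lemma div_mix {nab nc na nb den : ℝ} (h : nab * nc = na * nb) (hc : 0 < nc) :
    nab / den = na / nc * (nb / den) := by
  rw [div_mul_div_comm, ← h, mul_comm nab nc, mul_div_mul_left _ _ (ne_of_gt hc)]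

/-- KEY: the probability that the state is `v`, the players in `P` observe the
private histories `y`, and the public actions are `a` up to time `t`, factorizes
as the prior times a product of per-player weights. -/
lemma key (v : M.V) (t : Fin T) (a : Fin T → ∀ j, M.A j) (x0 : ∀ j, M.X j)
    (P : Finset (Fin N)) (y : ∀ j, Fin T → M.X j) :
    M.Pr (fun ω => ω.1 = v ∧ (∀ j ∈ P, ∀ s : Fin T, s ≤ t → ω.2.1 s j = y j s) ∧
        (∀ s : Fin T, s < t → ω.2.2 s = a s))
      = M.QV v * ∏ j, M.Ssum v t a x0 P y j := by
  have hD : ∀ (xs xs' : Fin T → ∀ j, M.X j) (as as' : Fin T → ∀ j, M.A j),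
      (∀ s : Fin T, s.val ≤ t.val → xs s = xs' s) →
      (∀ s : Fin T, s.val < t.val → as s = as' s) →
      (((∀ j ∈ P, ∀ s : Fin T, s ≤ t → xs s j = y j s) ∧
          (∀ s : Fin T, s < t → as s = a s))
        ↔ ((∀ j ∈ P, ∀ s : Fin T, s ≤ t → xs' s j = y j s) ∧
          (∀ s : Fin T, s < t → as' s = a s))) := by
    intro xs xs' as as' hx ha
    constructor
    · rintro ⟨h1, h2⟩
      refine ⟨fun j hj s hs => ?_, fun s hs => ?_⟩
      · rw [← congrFun (hx s (Fin.le_def.mp hs)) j]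
        exact h1 j hj s hs
      · rw [← ha s (Fin.lt_def.mp hs)]
        exact h2 s hs
    · rintro ⟨h1, h2⟩
      refine ⟨fun j hj s hs => ?_, fun s hs => ?_⟩
      · rw [congrFun (hx s (Fin.le_def.mp hs)) j]
        exact h1 j hj s hs
      · rw [ha s (Fin.lt_def.mp hs)]
        exact h2 s hs
  refine Eq.trans (M.Pr_eq_sum v (fun xs as =>
    (∀ j ∈ P, ∀ s : Fin T, s ≤ t → xs s j = y j s) ∧
      (∀ s : Fin T, s < t → as s = a s))) ?_
  refine Eq.trans (M.Rsum_top v x0 (fun xs as =>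
    (∀ j ∈ P, ∀ s : Fin T, s ≤ t → xs s j = y j s) ∧
      (∀ s : Fin T, s < t → as s = a s))) ?_
  refine Eq.trans (M.Rchain v x0 t.val (fun xs as =>
    (∀ j ∈ P, ∀ s : Fin T, s ≤ t → xs s j = y j s) ∧
      (∀ s : Fin T, s < t → as s = a s)) hD t.isLt) ?_
  exact M.Rsum_final v t a x0 P y

end GameModel

/-- player `i`'s belief over the other players' private observation
histories is the mixture, under her own posterior belief on the state, of the
conditional public distributions of those histories:
`ℙ(X^{-i}_{1:t} = x^{-i}_{1:t} | x^i_{1:t}, a_{1:t-1})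
  = Σ_v ℙ(X^{-i}_{1:t} = x^{-i}_{1:t} | V = v, A_{1:t-1} = a_{1:t-1})
        · ℙ(V = v | x^i_{1:t}, a_{1:t-1})`.
(Here `t : Fin T` is the index of the time called `t`, so `_{1:t}` histories are
conditions on indices `s ≤ t` and `a_{1:t-1}` on indices `s < t`; the hypothesis
`hsupp` says every `v` in the support of the posterior `ℙ(· | x^i_{1:t}, a_{1:t-1})`
satisfies `ℙ(V = v, A_{1:t-1} = a_{1:t-1}) > 0`.) -/
theorem belief_over_others_beliefs_via_own_belief
    (M : GameModel N T) (i : Fin N) (t : Fin T)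
    (x : Fin T → M.X i) (a : Fin T → ∀ j, M.A j)
    (hpos : 0 < M.Pr fun ω =>
      (∀ s, s ≤ t → ω.2.1 s i = x s) ∧ ∀ s, s < t → ω.2.2 s = a s)
    (hsupp : ∀ v : M.V,
      0 < M.Pr (fun ω => ω.1 = v ∧ (∀ s, s ≤ t → ω.2.1 s i = x s) ∧
          ∀ s, s < t → ω.2.2 s = a s) →
      0 < M.Pr fun ω => ω.1 = v ∧ ∀ s, s < t → ω.2.2 s = a s)
    (x' : Fin T → ∀ j, M.X j) :
    M.Pr (fun ω => (∀ s, s ≤ t → ∀ j, j ≠ i → ω.2.1 s j = x' s j) ∧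
          (∀ s, s ≤ t → ω.2.1 s i = x s) ∧ ∀ s, s < t → ω.2.2 s = a s)
        / M.Pr (fun ω => (∀ s, s ≤ t → ω.2.1 s i = x s) ∧ ∀ s, s < t → ω.2.2 s = a s)
      = ∑ v : M.V,
          (M.Pr (fun ω => (∀ s, s ≤ t → ∀ j, j ≠ i → ω.2.1 s j = x' s j) ∧
                ω.1 = v ∧ ∀ s, s < t → ω.2.2 s = a s)
              / M.Pr (fun ω => ω.1 = v ∧ ∀ s, s < t → ω.2.2 s = a s))
            * (M.Pr (fun ω => ω.1 = v ∧ (∀ s, s ≤ t → ω.2.1 s i = x s) ∧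
                ∀ s, s < t → ω.2.2 s = a s)
              / M.Pr (fun ω => (∀ s, s ≤ t → ω.2.1 s i = x s) ∧
                ∀ s, s < t → ω.2.2 s = a s)) := by
  -- the observation spaces are nonempty (otherwise the conditioning event has
  -- probability zero, contradicting `hpos`)
  have hne : Nonempty (Fin T → ∀ j, M.X j) := by
    by_contra h
    rw [not_nonempty_iff] at h
    have h0 : M.Pr (fun ω =>
        (∀ s, s ≤ t → ω.2.1 s i = x s) ∧ ∀ s, s < t → ω.2.2 s = a s) = 0 := by
      unfold GameModel.Pr
      exact Finset.sum_eq_zero fun ω _ => (h.false ω.2.1).elim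
    rw [h0] at hpos
    exact lt_irrefl 0 hpos
  obtain ⟨xf⟩ := hne
  obtain ⟨y, hyi, hyj⟩ : ∃ y : ∀ j, Fin T → M.X j,
      y i = x ∧ ∀ j, j ≠ i → y j = fun s => x' s j :=
    ⟨Function.update (fun j s => x' s j) i x,
      @Function.update_self (Fin N) (fun j => Fin T → M.X j) _ i x (fun j s => x' s j),
      fun j hj => @Function.update_of_ne (Fin N) (fun j => Fin T → M.X j) _ j i hj
        x (fun j s => x' s j)⟩
  set x0 : ∀ j, M.X j := xf t with hx0
  -- the four probabilities, via the key factorization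
  have hAB : ∀ v : M.V, M.Pr (fun ω => ω.1 = v ∧
        (∀ s, s ≤ t → ∀ j, j ≠ i → ω.2.1 s j = x' s j) ∧
        (∀ s, s ≤ t → ω.2.1 s i = x s) ∧ ∀ s, s < t → ω.2.2 s = a s)
      = M.QV v * ∏ j, M.Ssum v t a x0 Finset.univ y j := by
    intro v
    refine Eq.trans (M.Pr_congr ?_) (M.key v t a x0 Finset.univ y)
    intro ω
    constructor
    · rintro ⟨h1, h2, h3, h4⟩
      refine ⟨h1, fun j _ s hs => ?_, h4⟩
      by_cases hj : j = i
      · subst hj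
        rw [hyi]
        exact h3 s hs
      · rw [hyj j hj]
        exact h2 s hs j hj
    · rintro ⟨h1, h2, h3⟩
      refine ⟨h1, fun s hs j hj => ?_, fun s hs => ?_, h3⟩
      · have hh := h2 j (Finset.mem_univ j) s hs
        rwa [hyj j hj] at hh
      · have hh := h2 i (Finset.mem_univ i) s hs
        rwa [hyi] at hh
  have hB : ∀ v : M.V, M.Pr (fun ω => ω.1 = v ∧
        (∀ s, s ≤ t → ω.2.1 s i = x s) ∧ ∀ s, s < t → ω.2.2 s = a s)
      = M.QV v * ∏ j, M.Ssum v t a x0 {i} y j := by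
    intro v
    refine Eq.trans (M.Pr_congr ?_) (M.key v t a x0 {i} y)
    intro ω
    constructor
    · rintro ⟨h1, h2, h3⟩
      refine ⟨h1, fun j hj s hs => ?_, h3⟩
      rw [Finset.mem_singleton] at hj
      subst hj
      rw [hyi]
      exact h2 s hs
    · rintro ⟨h1, h2, h3⟩
      refine ⟨h1, fun s hs => ?_, h3⟩
      have hh := h2 i (Finset.mem_singleton_self i) s hs
      rwa [hyi] at hh
  have hC : ∀ v : M.V, M.Pr (fun ω => ω.1 = v ∧ ∀ s, s < t → ω.2.2 s = a s)
      = M.QV v * ∏ j, M.Ssum v t a x0 ∅ y j := by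
    intro v
    refine Eq.trans (M.Pr_congr ?_) (M.key v t a x0 ∅ y)
    intro ω
    constructor
    · rintro ⟨h1, h3⟩
      exact ⟨h1, fun j hj => absurd hj (Finset.notMem_empty j), h3⟩
    · rintro ⟨h1, -, h3⟩
      exact ⟨h1, h3⟩
  have hA : ∀ v : M.V, M.Pr (fun ω =>
        (∀ s, s ≤ t → ∀ j, j ≠ i → ω.2.1 s j = x' s j) ∧
        ω.1 = v ∧ ∀ s, s < t → ω.2.2 s = a s)
      = M.QV v * ∏ j, M.Ssum v t a x0 (Finset.univ.erase i) y j := by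
    intro v
    refine Eq.trans (M.Pr_congr ?_) (M.key v t a x0 (Finset.univ.erase i) y)
    intro ω
    constructor
    · rintro ⟨h2, h1, h3⟩
      refine ⟨h1, fun j hj s hs => ?_, h3⟩
      have hj' : j ≠ i := (Finset.mem_erase.mp hj).1
      rw [hyj j hj']
      exact h2 s hs j hj'
    · rintro ⟨h1, h2, h3⟩
      refine ⟨fun s hs j hj => ?_, h1, h3⟩
      have hh := h2 j (Finset.mem_erase.mpr ⟨hj, Finset.mem_univ j⟩) s hs
      rwa [hyj j hj] at hh
  -- conditional independence given the state and the public actions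
  have hswap : ∀ v : M.V,
      (M.QV v * ∏ j, M.Ssum v t a x0 Finset.univ y j) *
          (M.QV v * ∏ j, M.Ssum v t a x0 ∅ y j)
        = (M.QV v * ∏ j, M.Ssum v t a x0 (Finset.univ.erase i) y j) *
          (M.QV v * ∏ j, M.Ssum v t a x0 {i} y j) := by
    intro v
    rw [mul_mul_mul_comm, ← Finset.prod_mul_distrib,
      mul_mul_mul_comm (M.QV v), ← Finset.prod_mul_distrib]
    congr 1
    refine Finset.prod_congr rfl fun j _ => ?_
    by_cases hj : j = i
    · subst hj
      rw [M.Ssum_congr v t a x0 y j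
          (iff_of_true (Finset.mem_univ j) (Finset.mem_singleton_self j)),
        M.Ssum_congr v t a x0 y j
          (iff_of_false (Finset.notMem_empty j) (Finset.notMem_erase j Finset.univ))]
      exact mul_comm _ _
    · rw [M.Ssum_congr v t a x0 y j
          (iff_of_true (Finset.mem_univ j)
            (Finset.mem_erase.mpr ⟨hj, Finset.mem_univ j⟩)),
        M.Ssum_congr v t a x0 y j
          (iff_of_false (Finset.notMem_empty j)
            (fun hm => hj (Finset.mem_singleton.mp hm)))]
  have hindep : ∀ v : M.V,
      M.Pr (fun ω => ω.1 = v ∧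
          (∀ s, s ≤ t → ∀ j, j ≠ i → ω.2.1 s j = x' s j) ∧
          (∀ s, s ≤ t → ω.2.1 s i = x s) ∧ ∀ s, s < t → ω.2.2 s = a s) *
        M.Pr (fun ω => ω.1 = v ∧ ∀ s, s < t → ω.2.2 s = a s)
      = M.Pr (fun ω => (∀ s, s ≤ t → ∀ j, j ≠ i → ω.2.1 s j = x' s j) ∧
          ω.1 = v ∧ ∀ s, s < t → ω.2.2 s = a s) *
        M.Pr (fun ω => ω.1 = v ∧
          (∀ s, s ≤ t → ω.2.1 s i = x s) ∧ ∀ s, s < t → ω.2.2 s = a s) := by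
    intro v
    rw [hAB v, hC v, hA v, hB v]
    exact hswap v
  -- final assembly
  rw [M.Pr_split_v _, Finset.sum_div]
  refine Finset.sum_congr rfl fun v _ => ?_
  show M.Pr (fun ω => ω.1 = v ∧
        (∀ s, s ≤ t → ∀ j, j ≠ i → ω.2.1 s j = x' s j) ∧
        (∀ s, s ≤ t → ω.2.1 s i = x s) ∧ ∀ s, s < t → ω.2.2 s = a s)
      / M.Pr (fun ω => (∀ s, s ≤ t → ω.2.1 s i = x s) ∧ ∀ s, s < t → ω.2.2 s = a s)
    = M.Pr (fun ω => (∀ s, s ≤ t → ∀ j, j ≠ i → ω.2.1 s j = x' s j) ∧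
          ω.1 = v ∧ ∀ s, s < t → ω.2.2 s = a s)
        / M.Pr (fun ω => ω.1 = v ∧ ∀ s, s < t → ω.2.2 s = a s)
      * (M.Pr (fun ω => ω.1 = v ∧ (∀ s, s ≤ t → ω.2.1 s i = x s) ∧
            ∀ s, s < t → ω.2.2 s = a s)
        / M.Pr (fun ω => (∀ s, s ≤ t → ω.2.1 s i = x s) ∧
            ∀ s, s < t → ω.2.2 s = a s))
  by_cases hBv : 0 < M.Pr (fun ω => ω.1 = v ∧
      (∀ s, s ≤ t → ω.2.1 s i = x s) ∧ ∀ s, s < t → ω.2.2 s = a s)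
  · exact GameModel.div_mix (hindep v) (hsupp v hBv)
  · have hB0 : M.Pr (fun ω => ω.1 = v ∧
        (∀ s, s ≤ t → ω.2.1 s i = x s) ∧ ∀ s, s < t → ω.2.2 s = a s) = 0 :=
      le_antisymm (not_lt.mp hBv) (M.Pr_nonneg _)
    have hAB0 : M.Pr (fun ω => ω.1 = v ∧
        (∀ s, s ≤ t → ∀ j, j ≠ i → ω.2.1 s j = x' s j) ∧
        (∀ s, s ≤ t → ω.2.1 s i = x s) ∧ ∀ s, s < t → ω.2.2 s = a s) = 0 :=
      M.Pr_eq_zero_of_le (fun ω h => ⟨h.1, h.2.2.1, h.2.2.2⟩) hB0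
    rw [hAB0, hB0]
    simp
end

section
/- In the scalar Gaussian observation model, the conditional expectation of the state given one noisy observation is linear: E[V | σ(X)] = (σ² / (σ² + q²)) · X almost surely. -/
/-!
With `c = σ² / (σ² + q²)` the residual `V - c X` is uncorrelated with the observation
`X = V + W`. The pair `(V - c X, X)` is a linear image of the Gaussian vector `(V, W)`, so
being uncorrelated makes the residual independent of `X`. Hence
`E[V - c X | X] = E[V - c X] = 0`, which gives `E[V | X] = c X`.
-/

open MeasureTheory ProbabilityTheory
open scoped NNReal

namespace ProbabilityTheory

variable {Ω : Type*} {mΩ : MeasurableSpace Ω} {μ : Measure Ω}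

lemma HasGaussianLaw.prodMk_fst_add {E : Type*} [NormedAddCommGroup E]
    [NormedSpace ℝ E] [MeasurableSpace E] [BorelSpace E] [SecondCountableTopology E]
    {V W : Ω → E} (hVW : HasGaussianLaw (fun ω ↦ (V ω, W ω)) μ) :
    HasGaussianLaw (fun ω ↦ (V ω, V ω + W ω)) μ :=
  hVW.map_fun ((ContinuousLinearMap.fst ℝ E E).prod
    (ContinuousLinearMap.fst ℝ E E + ContinuousLinearMap.snd ℝ E E))

lemma HasGaussianLaw.condExp_comap_eq_integral_of_covariance_eq_zero
    {Y X : Ω → ℝ} (hY : Measurable Y) (hX : Measurable X)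
    (hYX : HasGaussianLaw (fun ω ↦ (Y ω, X ω)) μ) (hcov : cov[Y, X; μ] = 0) :
    μ[Y | MeasurableSpace.comap X inferInstance] =ᵐ[μ] fun _ ↦ μ[Y] := by
  have := hYX.isProbabilityMeasure
  have hindep : Indep (MeasurableSpace.comap Y inferInstance)
      (MeasurableSpace.comap X inferInstance) μ :=
    (IndepFun_iff_Indep _ _ _).1 (hYX.indepFun_of_covariance_eq_zero hcov)
  exact condExp_indep_eq hY.comap_le hX.comap_le
    (Measurable.of_comap_le le_rfl).stronglyMeasurable hindep

theorem condExp_comap_eq_of_hasGaussianLaw [IsProbabilityMeasure μ] {V X : Ω → ℝ}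
    (hV : Measurable V) (hX : Measurable X) (hVX : HasGaussianLaw (fun ω ↦ (V ω, X ω)) μ)
    {c : ℝ} (hc : cov[V, X; μ] = c * Var[X; μ]) :
    μ[V | MeasurableSpace.comap X inferInstance] =ᵐ[μ] fun ω ↦ μ[V] + c * (X ω - μ[X]) := by
  set Y : Ω → ℝ := fun ω ↦ V ω - c * X ω
  have hcX : Integrable (fun ω ↦ c * X ω) μ := hVX.snd.integrable.const_mul c
  have hY : Integrable Y μ := hVX.fst.integrable.sub hcX
  have hYX : HasGaussianLaw (fun ω ↦ (Y ω, X ω)) μ :=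
    hVX.map_fun ((ContinuousLinearMap.fst ℝ ℝ ℝ - c • ContinuousLinearMap.snd ℝ ℝ ℝ).prod
      (ContinuousLinearMap.snd ℝ ℝ ℝ))
  have hcov : cov[Y, X; μ] = 0 := by
    rw [covariance_fun_sub_left hVX.fst.memLp_two (hVX.snd.memLp_two.const_mul c)
      hVX.snd.memLp_two, covariance_const_mul_left, covariance_self hX.aemeasurable, hc, sub_self]
  have hcondY : μ[Y | MeasurableSpace.comap X inferInstance] =ᵐ[μ] fun _ ↦ μ[Y] :=
    hYX.condExp_comap_eq_integral_of_covariance_eq_zero (hV.sub (hX.const_mul c)) hX hcov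
  have hcondX : μ[fun ω ↦ c * X ω | MeasurableSpace.comap X inferInstance] = fun ω ↦ c * X ω :=
    condExp_of_stronglyMeasurable hX.comap_le
      ((Measurable.of_comap_le le_rfl).const_mul c).stronglyMeasurable hcX
  have hV_eq : V = Y + fun ω ↦ c * X ω := by ext ω; simp [Y]
  have hmean : μ[Y] = μ[V] - c * μ[X] := by
    rw [integral_sub hVX.fst.integrable hcX, integral_const_mul]
  conv_lhs => rw [hV_eq]
  filter_upwards [condExp_add hY hcX (MeasurableSpace.comap X inferInstance), hcondY]
    with ω hadd hcondYω
  rw [hadd, Pi.add_apply, hcondYω, hcondX, hmean]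
  ring

theorem condExp_comap_add_of_indepFun_gaussianReal [IsProbabilityMeasure μ] {V W : Ω → ℝ}
    (hV : Measurable V) (hW : Measurable W) (hVW : IndepFun V W μ) {m₁ m₂ : ℝ} {v w : ℝ≥0}
    (hVlaw : HasLaw V (gaussianReal m₁ v) μ) (hWlaw : HasLaw W (gaussianReal m₂ w) μ) :
    μ[V | MeasurableSpace.comap (fun ω ↦ V ω + W ω) inferInstance]
      =ᵐ[μ] fun ω ↦ m₁ + v / (v + w) * (V ω + W ω - (m₁ + m₂)) := by
  have hVWlaw : HasGaussianLaw (fun ω ↦ (V ω, W ω)) μ :=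
    hVW.hasGaussianLaw hVlaw.hasGaussianLaw hWlaw.hasGaussianLaw
  have hV2 : MemLp V 2 μ := hVWlaw.fst.memLp_two
  have hW2 : MemLp W 2 μ := hVWlaw.snd.memLp_two
  have hcov : cov[V, fun ω ↦ V ω + W ω; μ] = v / (v + w) * Var[fun ω ↦ V ω + W ω; μ] := by
    change cov[V, V + W; μ] = v / (v + w) * Var[V + W; μ]
    rw [covariance_add_right hV2 hV2 hW2, covariance_self hV.aemeasurable,
      hVW.covariance_eq_zero hV2 hW2, hVW.variance_add hV2 hW2, hVlaw.variance_eq,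
      hWlaw.variance_eq, variance_id_gaussianReal, variance_id_gaussianReal, add_zero,
      div_mul_cancel_of_imp]
    -- `v / (v + w)` is the junk value `0` when `v + w = 0`, but then `v = 0` as well.
    exact fun hvw ↦ by exact_mod_cast (add_eq_zero.1 (by exact_mod_cast hvw : v + w = 0)).1
  have hmeanV : μ[V] = m₁ := by rw [hVlaw.integral_eq, integral_id_gaussianReal]
  have hmeanX : μ[fun ω ↦ V ω + W ω] = m₁ + m₂ := by
    rw [integral_add hVWlaw.fst.integrable hVWlaw.snd.integrable, hmeanV, hWlaw.integral_eq,
      integral_id_gaussianReal]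
  filter_upwards [condExp_comap_eq_of_hasGaussianLaw (X := fun ω ↦ V ω + W ω) hV (hV.add hW)
    hVWlaw.prodMk_fst_add hcov] with ω h
  rw [h, hmeanV, hmeanX]

end ProbabilityTheory

theorem condexp_state_given_observation_linear_general
    {Ω : Type*} [MeasurableSpace Ω] (μ : Measure Ω) [IsProbabilityMeasure μ]
    (σ q : ℝ)
    (V W : Ω → ℝ) (hV : Measurable V) (hW : Measurable W)
    (hindep : IndepFun V W μ)
    (hVlaw : μ.map V = gaussianReal 0 ⟨σ ^ 2, sq_nonneg σ⟩)
    (hWlaw : μ.map W = gaussianReal 0 ⟨q ^ 2, sq_nonneg q⟩) :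
    μ[V | MeasurableSpace.comap (fun ω => V ω + W ω) inferInstance]
      =ᵐ[μ] fun ω => σ ^ 2 / (σ ^ 2 + q ^ 2) * (V ω + W ω) := by
  filter_upwards [condExp_comap_add_of_indepFun_gaussianReal hV hW hindep
    ⟨hV.aemeasurable, hVlaw⟩ ⟨hW.aemeasurable, hWlaw⟩] with ω h
  rw [h, zero_add, add_zero, sub_zero]
  rfl

/-- in the scalar Gaussian observation model (`V ~ N(0, σ²)` and
`W ~ N(0, q²)` independent, observation `X = V + W`), the conditional expectation of
the state given the observation is linear: `E[V | σ(X)] = (σ² / (σ² + q²)) · X`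
almost surely. -/
theorem condexp_state_given_observation_linear
    {Ω : Type*} [MeasurableSpace Ω] (μ : Measure Ω) [IsProbabilityMeasure μ]
    (σ q : ℝ) (hσ : 0 < σ) (hq : 0 < q)
    (V W : Ω → ℝ) (hV : Measurable V) (hW : Measurable W)
    (hindep : IndepFun V W μ)
    (hVlaw : μ.map V = gaussianReal 0 ⟨σ ^ 2, sq_nonneg σ⟩)
    (hWlaw : μ.map W = gaussianReal 0 ⟨q ^ 2, sq_nonneg q⟩) :
    μ[V | MeasurableSpace.comap (fun ω => V ω + W ω) inferInstance]
      =ᵐ[μ] fun ω => σ ^ 2 / (σ ^ 2 + q ^ 2) * (V ω + W ω) :=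
  condexp_state_given_observation_linear_general μ σ q V W hV hW hindep hVlaw hWlaw
end

section
/- In the scalar Gaussian observation model, the posterior distribution of the state given one noisy observation is Gaussian: for (law of X)-almost every x, the conditional distribution of V given X = x (the disintegration kernel of the joint law of (X, V)) is the Gaussian measure with mean (σ² / (σ² + q²)) · x and variance σ² q² / (σ² + q²) (equivalently, variance σ² − σ⁴/(σ² + q²)). -/
/-!
With `b = Cov(X, V) / Var X`, the regression residual `Z = V - b X` is uncorrelated with `X`.
Since `(X, Z)` is a linear image of the Gaussian vector `(V, W)`, it is jointly Gaussian, so `Z`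
is independent of `X`. Hence the joint law of `(X, V) = (X, b X + Z)` is the law of `X` composed
with the kernel `x ↦ N(b x + E Z, Var Z)`, which is therefore the conditional kernel by uniqueness
of disintegration. For `X = V + W` one finds `b = σ² / (σ² + q²)` and
`Var Z = σ² - σ⁴ / (σ² + q²)`.
-/

open MeasureTheory ProbabilityTheory
open scoped NNReal

namespace ProbabilityTheory

noncomputable def linearGaussianKernel (m b : ℝ) (v : ℝ≥0) : Kernel ℝ ℝ where
  toFun x := gaussianReal (m + b * x) v
  measurable' := measurable_gaussianReal.comp
    (f := fun x ↦ (m + b * x, v)) (by fun_prop)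

@[simp]
lemma linearGaussianKernel_apply (m b : ℝ) (v : ℝ≥0) (x : ℝ) :
    linearGaussianKernel m b v x = gaussianReal (m + b * x) v := rfl

instance (m b : ℝ) (v : ℝ≥0) : IsMarkovKernel (linearGaussianKernel m b v) :=
  ⟨fun x ↦ by rw [linearGaussianKernel_apply]; infer_instance⟩

variable {Ω : Type*} {mΩ : MeasurableSpace Ω} {P : Measure Ω}

lemma IndepFun.map_prodMk_mul_add_eq_compProd [IsFiniteMeasure P] {X Z : Ω → ℝ}
    (hX : AEMeasurable X P) (hZ : AEMeasurable Z P) (hXZ : X ⟂ᵢ[P] Z) {m : ℝ} {v : ℝ≥0}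
    (hZlaw : P.map Z = gaussianReal m v) (b : ℝ) :
    P.map (fun ω ↦ (X ω, b * X ω + Z ω)) = P.map X ⊗ₘ linearGaussianKernel m b v := by
  have hshear : Measurable fun p : ℝ × ℝ ↦ (p.1, b * p.1 + p.2) := by fun_prop
  rw [show (fun ω ↦ (X ω, b * X ω + Z ω)) = (fun p : ℝ × ℝ ↦ (p.1, b * p.1 + p.2)) ∘
      (fun ω ↦ (X ω, Z ω)) from rfl,
    ← AEMeasurable.map_map_of_aemeasurable hshear.aemeasurable (hX.prodMk hZ),
    (indepFun_iff_map_prod_eq_prod_map_map hX hZ).1 hXZ, hZlaw]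
  ext s hs
  rw [Measure.map_apply hshear hs, Measure.prod_apply (hshear hs), Measure.compProd_apply hs]
  refine lintegral_congr fun x ↦ ?_
  rw [linearGaussianKernel_apply, ← gaussianReal_map_const_add,
    Measure.map_apply (by fun_prop) (measurable_prodMk_left hs)]
  rfl

section Regression

variable [IsFiniteMeasure P] {X Y : Ω → ℝ}

lemma covariance_sub_regression_eq_zero (hX : MemLp X 2 P) (hY : MemLp Y 2 P)
    (hvar : Var[X; P] ≠ 0) :
    cov[X, fun ω ↦ Y ω - cov[X, Y; P] / Var[X; P] * X ω; P] = 0 := by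
  rw [covariance_fun_sub_right hX hY (hX.const_mul _), covariance_const_mul_right,
    covariance_self hX.aemeasurable]
  field_simp
  ring

lemma variance_sub_regression (hX : MemLp X 2 P) (hY : MemLp Y 2 P)
    (hvar : Var[X; P] ≠ 0) :
    Var[fun ω ↦ Y ω - cov[X, Y; P] / Var[X; P] * X ω; P]
      = Var[Y; P] - cov[X, Y; P] ^ 2 / Var[X; P] := by
  rw [variance_fun_sub hY (hX.const_mul _), variance_const_mul, covariance_const_mul_right,
    covariance_comm]
  field_simp
  ring

end Regression

theorem HasGaussianLaw.map_prodMk_eq_compProd {X Y : Ω → ℝ}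
    (hXY : HasGaussianLaw (fun ω ↦ (X ω, Y ω)) P) (hvar : Var[X; P] ≠ 0) :
    P.map (fun ω ↦ (X ω, Y ω)) = P.map X ⊗ₘ linearGaussianKernel
      (P[Y] - cov[X, Y; P] / Var[X; P] * P[X]) (cov[X, Y; P] / Var[X; P])
      (Var[Y; P] - cov[X, Y; P] ^ 2 / Var[X; P]).toNNReal := by
  have := hXY.isProbabilityMeasure
  set b := cov[X, Y; P] / Var[X; P]
  have hX := hXY.fst.memLp_two
  have hY := hXY.snd.memLp_two
  have hXZ : HasGaussianLaw (fun ω ↦ (X ω, Y ω - b * X ω)) P :=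
    hXY.map_fun ((ContinuousLinearMap.fst ℝ ℝ ℝ).prod
      (ContinuousLinearMap.snd ℝ ℝ ℝ - b • ContinuousLinearMap.fst ℝ ℝ ℝ))
  have hindep := hXZ.indepFun_of_covariance_eq_zero (covariance_sub_regression_eq_zero hX hY hvar)
  have hZlaw : P.map (fun ω ↦ Y ω - b * X ω) = gaussianReal (P[Y] - b * P[X])
      (Var[Y; P] - cov[X, Y; P] ^ 2 / Var[X; P]).toNNReal := by
    rw [hXZ.snd.map_eq_gaussianReal, integral_sub (hY.integrable one_le_two)
      ((hX.const_mul b).integrable one_le_two),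
      integral_const_mul, variance_sub_regression hX hY hvar]
  simpa using hindep.map_prodMk_mul_add_eq_compProd hXZ.fst.aemeasurable hXZ.snd.aemeasurable
    hZlaw b

lemma HasLaw.integral_eq_of_gaussianReal {X : Ω → ℝ} {m : ℝ} {v : ℝ≥0}
    (hX : HasLaw X (gaussianReal m v) P) : P[X] = m := by
  rw [hX.integral_eq, integral_id_gaussianReal]

lemma HasLaw.variance_eq_of_gaussianReal {X : Ω → ℝ} {m : ℝ} {v : ℝ≥0}
    (hX : HasLaw X (gaussianReal m v) P) : Var[X; P] = v := by
  rw [hX.variance_eq, variance_id_gaussianReal]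

theorem IndepFun.map_prodMk_add_eq_compProd_gaussianReal {V W : Ω → ℝ} {v₁ v₂ : ℝ≥0}
    (hV : HasLaw V (gaussianReal 0 v₁) P) (hW : HasLaw W (gaussianReal 0 v₂) P)
    (hVW : V ⟂ᵢ[P] W) (hv : v₁ + v₂ ≠ 0) :
    P.map (fun ω ↦ (V ω + W ω, V ω)) = P.map (fun ω ↦ V ω + W ω) ⊗ₘ
      linearGaussianKernel 0 (v₁ / (v₁ + v₂)) (v₁ * v₂ / (v₁ + v₂)) := by
  have hV2 := hV.hasGaussianLaw.memLp_two
  have hW2 := hW.hasGaussianLaw.memLp_two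
  have := hV.hasGaussianLaw.isProbabilityMeasure
  have hjoint : HasGaussianLaw (fun ω ↦ (V ω + W ω, V ω)) P :=
    (hVW.hasGaussianLaw hV.hasGaussianLaw hW.hasGaussianLaw).map_fun
      ((ContinuousLinearMap.fst ℝ ℝ ℝ + ContinuousLinearMap.snd ℝ ℝ ℝ).prod
        (ContinuousLinearMap.fst ℝ ℝ ℝ))
  have hmeanX : P[fun ω ↦ V ω + W ω] = 0 := by
    rw [integral_add (hV2.integrable one_le_two) (hW2.integrable one_le_two),
      hV.integral_eq_of_gaussianReal, hW.integral_eq_of_gaussianReal, add_zero]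
  have hvarX : Var[fun ω ↦ V ω + W ω; P] = v₁ + v₂ := by
    rw [hVW.variance_fun_add hV2 hW2, hV.variance_eq_of_gaussianReal,
      hW.variance_eq_of_gaussianReal]
  have hcov : cov[fun ω ↦ V ω + W ω, V; P] = v₁ := by
    rw [← Pi.add_def, covariance_add_left hV2 hW2 hV2, covariance_self hV.aemeasurable,
      hV.variance_eq_of_gaussianReal, hVW.symm.covariance_eq_zero hW2 hV2, add_zero]
  have hposterior : (v₁ : ℝ) - v₁ ^ 2 / (v₁ + v₂) = ((v₁ * v₂ / (v₁ + v₂) : ℝ≥0) : ℝ) := by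
    have : (v₁ : ℝ) + v₂ ≠ 0 := by exact_mod_cast hv
    push_cast
    field_simp
    ring
  rw [hjoint.map_prodMk_eq_compProd (by rw [hvarX]; exact_mod_cast hv), hcov, hvarX, hmeanX,
    hV.variance_eq_of_gaussianReal, hV.integral_eq_of_gaussianReal, mul_zero, sub_zero,
    hposterior, Real.toNNReal_coe]

end ProbabilityTheory

open ProbabilityTheory

/-- in the scalar Gaussian observation model (`V ~ N(0, σ²)` and
`W ~ N(0, q²)` independent, observation `X = V + W`), the posterior distribution of
the state given the observation is Gaussian: letting `ρ` be the joint law of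
`(X, V)` on `ℝ × ℝ`, for `ρ.fst`-almost every `x` (i.e. for (law of `X`)-a.e. `x`)
the disintegration kernel of `ρ` at `x` is the Gaussian measure with mean
`(σ² / (σ² + q²)) · x` and variance `σ² q² / (σ² + q²)`. -/
theorem posterior_of_state_given_observation_gaussian
    {Ω : Type*} [MeasurableSpace Ω] (μ : Measure Ω) [IsProbabilityMeasure μ]
    (σ q : ℝ) (hσ : 0 < σ)
    (V W : Ω → ℝ) (hV : Measurable V) (hW : Measurable W)
    (hindep : IndepFun V W μ)
    (hVlaw : μ.map V = gaussianReal 0 ⟨σ ^ 2, sq_nonneg σ⟩)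
    (hWlaw : μ.map W = gaussianReal 0 ⟨q ^ 2, sq_nonneg q⟩)
    (ρ : Measure (ℝ × ℝ)) [IsFiniteMeasure ρ]
    (hρ : ρ = μ.map fun ω => (V ω + W ω, V ω)) :
    ∀ᵐ x ∂ρ.fst,
      ρ.condKernel x
        = gaussianReal (σ ^ 2 / (σ ^ 2 + q ^ 2) * x)
            ⟨σ ^ 2 * q ^ 2 / (σ ^ 2 + q ^ 2), by positivity⟩ := by
  set v₁ : ℝ≥0 := ⟨σ ^ 2, sq_nonneg σ⟩
  set v₂ : ℝ≥0 := ⟨q ^ 2, sq_nonneg q⟩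
  have hv : v₁ + v₂ ≠ 0 := by
    rw [← NNReal.coe_ne_zero, NNReal.coe_add]
    exact (by positivity : σ ^ 2 + q ^ 2 ≠ 0)
  have hdisint := hindep.map_prodMk_add_eq_compProd_gaussianReal
    ⟨hV.aemeasurable, hVlaw⟩ ⟨hW.aemeasurable, hWlaw⟩ hv
  rw [← hρ] at hdisint
  have hρκ : ρ = ρ.fst ⊗ₘ linearGaussianKernel 0 (v₁ / (v₁ + v₂)) (v₁ * v₂ / (v₁ + v₂)) := by
    rw [hdisint, Measure.fst_compProd]
  filter_upwards [eq_condKernel_of_measure_eq_compProd _ hρκ] with x hx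
  rw [← hx, linearGaussianKernel_apply, zero_add]
  rfl
end

section
/- In the scalar Gaussian observation model, the conditional distribution of the posterior-mean estimate given the state is Gaussian with mean linear in the state: let c = σ² / (σ² + q²) and V̂ = c · X. Then for (law of V)-almost every v, the conditional distribution of V̂ given V = v (the disintegration kernel of the joint law of (V, V̂)) is the Gaussian measure with mean c · v and variance c² q². -/
/-!
By independence the joint law of `(V, W)` is a product, so the law of `(V, c (V + W))`
disintegrates over the law of `V` into the kernel `v ↦ law of c (v + W)`. By uniqueness of
disintegrations this kernel is a.e. the conditional kernel, and as an affine image of the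
Gaussian law of `W` it is the Gaussian with mean `c v` and variance `c² q²`.
-/

open MeasureTheory ProbabilityTheory Function

section

variable {α β γ : Type*} [MeasurableSpace α] [MeasurableSpace β] [MeasurableSpace γ]

lemma ProbabilityTheory.gaussianReal_map_mul_add {m : ℝ} {v w : NNReal} (b a : ℝ)
    (hw : (w : ℝ) = b ^ 2 * v) :
    (gaussianReal m v).map (fun x ↦ b * x + a) = gaussianReal (b * m + a) w := by
  have h_comp : (fun x ↦ b * x + a) = (· + a) ∘ (b * ·) := rfl
  rw [h_comp, ← Measure.map_map (measurable_add_const a) (measurable_const_mul b),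
    gaussianReal_map_const_mul, gaussianReal_map_add_const]
  congr
  ext
  simp [hw]

lemma ProbabilityTheory.Kernel.map_id_prod_const_apply (ν : Measure β) [SFinite ν]
    {f : α → β → γ} (hf : Measurable (uncurry f)) (a : α) :
    (Kernel.id ×ₖ Kernel.const α ν).map (uncurry f) a = ν.map (f a) := by
  rw [Kernel.map_apply _ hf, Kernel.prod_apply, Kernel.id_apply, Kernel.const_apply,
    Measure.dirac_prod, Measure.map_map hf measurable_prodMk_left]
  rfl

lemma MeasureTheory.Measure.map_prod_prodMk_eq_compProd (μ : Measure α) (ν : Measure β)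
    [SFinite μ] [SFinite ν] {f : α → β → γ} (hf : Measurable (uncurry f)) :
    (μ.prod ν).map (fun p ↦ (p.1, f p.1 p.2)) =
      μ ⊗ₘ (Kernel.id ×ₖ Kernel.const α ν).map (uncurry f) := by
  have hg : Measurable fun p : α × β ↦ (p.1, f p.1 p.2) := measurable_fst.prodMk hf
  ext s hs
  rw [Measure.map_apply hg hs, Measure.prod_apply (hg hs), Measure.compProd_apply hs]
  refine lintegral_congr fun a ↦ ?_
  rw [Kernel.map_id_prod_const_apply ν hf,
    Measure.map_apply hf.of_uncurry_left (measurable_prodMk_left hs)]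
  rfl

theorem ProbabilityTheory.IndepFun.condKernel_map_prodMk_ae_eq [StandardBorelSpace γ]
    [Nonempty γ] {Ω : Type*} [MeasurableSpace Ω] {μ : Measure Ω} [IsFiniteMeasure μ]
    {X : Ω → α} {Y : Ω → β} (hXY : IndepFun X Y μ) (hX : Measurable X) (hY : Measurable Y)
    {f : α → β → γ} (hf : Measurable (uncurry f)) :
    ∀ᵐ a ∂μ.map X, (μ.map fun ω ↦ (X ω, f (X ω) (Y ω))).condKernel a = (μ.map Y).map (f a) := by
  set ρ := μ.map fun ω ↦ (X ω, f (X ω) (Y ω))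
  have hρ_fst : ρ.fst = μ.map X := Measure.fst_map_prodMk (hf.comp (hX.prodMk hY))
  have hρ : ρ = ((μ.map X).prod (μ.map Y)).map fun p ↦ (p.1, f p.1 p.2) := by
    have hg : Measurable fun p : α × β ↦ (p.1, f p.1 p.2) := measurable_fst.prodMk hf
    rw [← (indepFun_iff_map_prod_eq_prod_map_map hX.aemeasurable hY.aemeasurable).mp hXY,
      Measure.map_map hg (hX.prodMk hY)]
    rfl
  rw [Measure.map_prod_prodMk_eq_compProd _ _ hf, ← hρ_fst] at hρ
  rw [← hρ_fst]
  filter_upwards [eq_condKernel_of_measure_eq_compProd _ hρ] with a ha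
  rw [← ha, Kernel.map_id_prod_const_apply _ hf]

end

theorem conditional_law_of_estimate_given_state_gaussian
    {Ω : Type*} [MeasurableSpace Ω] (μ : Measure Ω) [IsProbabilityMeasure μ]
    (q : ℝ)
    (V W : Ω → ℝ) (hV : Measurable V) (hW : Measurable W)
    (hindep : IndepFun V W μ)
    (hWlaw : μ.map W = gaussianReal 0 ⟨q ^ 2, sq_nonneg q⟩)
    (c : ℝ)
    (ρ : Measure (ℝ × ℝ)) [IsFiniteMeasure ρ]
    (hρ : ρ = μ.map fun ω => (V ω, c * (V ω + W ω))) :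
    ∀ᵐ v ∂ρ.fst,
      ρ.condKernel v = gaussianReal (c * v) ⟨c ^ 2 * q ^ 2, by positivity⟩ := by
  have hf : Measurable (uncurry fun v w : ℝ ↦ c * (v + w)) := by fun_prop
  subst hρ
  rw [Measure.fst_map_prodMk (by fun_prop)]
  filter_upwards [hindep.condKernel_map_prodMk_ae_eq hV hW hf] with v hv
  have h_affine : (fun w ↦ c * (v + w)) = fun w ↦ c * w + c * v := by
    ext w
    ring
  have h_gauss := gaussianReal_map_mul_add (m := 0) (v := ⟨q ^ 2, sq_nonneg q⟩)
    (w := ⟨c ^ 2 * q ^ 2, by positivity⟩) c (c * v) rfl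
  rw [mul_zero, zero_add] at h_gauss
  rwa [hv, hWlaw, h_affine]
end

section
/- Estimates of conditionally affine quantities are affine in the own estimate: let (Ω, ℱ, ℙ) be a probability space, V and Y integrable real-valued random variables, 𝒢 ⊆ ℱ a sub-σ-algebra, and e, f ∈ ℝ. If σ(Y) and 𝒢 are conditionally independent given σ(V), and E[Y | σ(V)] = e·V + f almost surely, then E[Y | 𝒢] = e·E[V | 𝒢] + f almost surely. -/
/-!
For `B ∈ G` put `h = E[1_B | σ(V)]`. Conditional independence says that `1_B` and `h` have the
same integral over every set of `σ(Y)`, i.e. `E[1_B | σ(Y)] = E[h | σ(Y)]`. Pulling out the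
`σ(Y)`-measurable factor `Y`, and then using that `E[· | σ(V)]` is self-adjoint against bounded
functions, gives `∫_B Y = ∫ Y h = ∫_B E[Y | σ(V)]`. Hence
`E[Y | G] = E[E[Y | σ(V)] | G] = E[e V + f | G]`.
-/

open MeasureTheory ProbabilityTheory

theorem Set.norm_indicator_one_le {Ω : Type*} (s : Set Ω) (ω : Ω) :
    ‖s.indicator (fun _ ↦ (1 : ℝ)) ω‖ ≤ 1 :=
  (norm_indicator_le_norm_self _ _).trans_eq norm_one

namespace MeasureTheory

variable {Ω : Type*} {m m₁ m₀ : MeasurableSpace Ω} {μ : Measure Ω}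

theorem integral_mul_condExp (hm : m ≤ m₀) [SigmaFinite (μ.trim hm)] {f g : Ω → ℝ}
    (hf : StronglyMeasurable[m] f) (hfg : Integrable (f * g) μ) (hg : Integrable g μ) :
    ∫ ω, f ω * μ[g | m] ω ∂μ = ∫ ω, f ω * g ω ∂μ :=
  (integral_congr_ae (condExp_mul_of_stronglyMeasurable_left hf hfg hg).symm).trans
    (integral_condExp hm)

theorem integral_mul_condExp_eq_integral_condExp_mul (hm : m ≤ m₀) [IsFiniteMeasure μ]
    {f g : Ω → ℝ} {C : ℝ} (hf : Integrable f μ) (hg : Integrable g μ)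
    (hg_bound : ∀ᵐ ω ∂μ, ‖g ω‖ ≤ C) :
    ∫ ω, f ω * μ[g | m] ω ∂μ = ∫ ω, μ[f | m] ω * g ω ∂μ := by
  have hcg_bound : ∀ᵐ ω ∂μ, ‖μ[g | m] ω‖ ≤ C :=
    ae_bdd_abs_condExp_of_ae_bdd_abs (by simpa only [Real.norm_eq_abs] using hg_bound)
  calc ∫ ω, f ω * μ[g | m] ω ∂μ = ∫ ω, μ[g | m] ω * f ω ∂μ := by simp_rw [mul_comm]
    _ = ∫ ω, μ[g | m] ω * μ[f | m] ω ∂μ :=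
      (integral_mul_condExp hm stronglyMeasurable_condExp
        (hf.bdd_mul integrable_condExp.aestronglyMeasurable hcg_bound) hf).symm
    _ = ∫ ω, μ[f | m] ω * g ω ∂μ := by
      simp_rw [mul_comm (μ[g | m] _)]
      exact integral_mul_condExp hm stronglyMeasurable_condExp
        (integrable_condExp.mul_bdd hg.aestronglyMeasurable hg_bound) hg

theorem condExp_ae_eq_condExp_of_forall_setIntegral_eq {E : Type*} [NormedAddCommGroup E]
    [NormedSpace ℝ E] [CompleteSpace E] (hm : m ≤ m₀) [SigmaFinite (μ.trim hm)] {f g : Ω → E}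
    (hf : Integrable f μ) (hg : Integrable g μ)
    (hfg : ∀ s, MeasurableSet[m] s → ∫ ω in s, f ω ∂μ = ∫ ω in s, g ω ∂μ) :
    μ[f | m] =ᵐ[μ] μ[g | m] :=
  ae_eq_condExp_of_forall_setIntegral_eq hm hg (fun _ _ _ ↦ integrable_condExp.integrableOn)
    (fun s hs _ ↦ by rw [setIntegral_condExp hm hf hs, hfg s hs])
    stronglyMeasurable_condExp.aestronglyMeasurable

theorem setIntegral_eq_integral_mul_indicator_one {s : Set Ω} (hs : MeasurableSet s)
    (f : Ω → ℝ) : ∫ ω in s, f ω ∂μ = ∫ ω, f ω * s.indicator (fun _ ↦ (1 : ℝ)) ω ∂μ := by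
  rw [← integral_indicator hs]
  congr 1 with ω
  by_cases hω : ω ∈ s <;> simp [hω]

section CondIndep

variable [IsFiniteMeasure μ] {B : Set Ω}

theorem condExp_indicator_ae_eq_condExp_condExp_indicator (hm₁ : m₁ ≤ m₀) (hm : m ≤ m₀)
    (hB : MeasurableSet B)
    (hfact : ∀ A, MeasurableSet[m₁] A →
      μ[(A ∩ B).indicator (fun _ ↦ (1 : ℝ)) | m] =ᵐ[μ]
        μ[A.indicator (fun _ ↦ (1 : ℝ)) | m] * μ[B.indicator (fun _ ↦ (1 : ℝ)) | m]) :
    μ[B.indicator (fun _ ↦ (1 : ℝ)) | m₁] =ᵐ[μ]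
      μ[μ[B.indicator (fun _ ↦ (1 : ℝ)) | m] | m₁] := by
  refine condExp_ae_eq_condExp_of_forall_setIntegral_eq hm₁
    ((integrable_const 1).indicator hB) integrable_condExp fun A hA ↦ ?_
  have hA₀ : MeasurableSet A := hm₁ A hA
  calc ∫ ω in A, B.indicator (fun _ ↦ (1 : ℝ)) ω ∂μ
      = ∫ ω, (A ∩ B).indicator (fun _ ↦ (1 : ℝ)) ω ∂μ := by
        rw [← integral_indicator hA₀, Set.indicator_indicator]
    _ = ∫ ω, μ[(A ∩ B).indicator (fun _ ↦ (1 : ℝ)) | m] ω ∂μ := (integral_condExp hm).symm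
    _ = ∫ ω, μ[B.indicator (fun _ ↦ (1 : ℝ)) | m] ω *
          μ[A.indicator (fun _ ↦ (1 : ℝ)) | m] ω ∂μ := by
        refine integral_congr_ae ?_
        filter_upwards [hfact A hA] with ω hω
        rw [hω, Pi.mul_apply, mul_comm]
    _ = ∫ ω, μ[B.indicator (fun _ ↦ (1 : ℝ)) | m] ω * A.indicator (fun _ ↦ (1 : ℝ)) ω ∂μ :=
        integral_mul_condExp hm stronglyMeasurable_condExp
          (integrable_condExp.mul_bdd ((integrable_const 1).indicator hA₀).aestronglyMeasurable
            (.of_forall (Set.norm_indicator_one_le A)))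
          ((integrable_const 1).indicator hA₀)
    _ = ∫ ω in A, μ[B.indicator (fun _ ↦ (1 : ℝ)) | m] ω ∂μ :=
        (setIntegral_eq_integral_mul_indicator_one hA₀ _).symm

theorem setIntegral_condExp_of_indicator_condIndep (hm₁ : m₁ ≤ m₀) (hm : m ≤ m₀)
    (hB : MeasurableSet B)
    (hfact : ∀ A, MeasurableSet[m₁] A →
      μ[(A ∩ B).indicator (fun _ ↦ (1 : ℝ)) | m] =ᵐ[μ]
        μ[A.indicator (fun _ ↦ (1 : ℝ)) | m] * μ[B.indicator (fun _ ↦ (1 : ℝ)) | m])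
    {f : Ω → ℝ} (hf : StronglyMeasurable[m₁] f) (hfi : Integrable f μ) :
    ∫ ω in B, μ[f | m] ω ∂μ = ∫ ω in B, f ω ∂μ := by
  set χ := B.indicator (fun _ ↦ (1 : ℝ))
  have hχ : Integrable χ μ := (integrable_const 1).indicator hB
  have hχ_bound : ∀ᵐ ω ∂μ, ‖χ ω‖ ≤ 1 := .of_forall (Set.norm_indicator_one_le B)
  have hcχ_bound : ∀ᵐ ω ∂μ, ‖μ[χ | m] ω‖ ≤ 1 :=
    ae_bdd_abs_condExp_of_ae_bdd_abs (by simpa only [Real.norm_eq_abs] using hχ_bound)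
  calc ∫ ω in B, μ[f | m] ω ∂μ = ∫ ω, μ[f | m] ω * χ ω ∂μ :=
        setIntegral_eq_integral_mul_indicator_one hB _
    _ = ∫ ω, f ω * μ[χ | m] ω ∂μ :=
        (integral_mul_condExp_eq_integral_condExp_mul hm hfi hχ hχ_bound).symm
    _ = ∫ ω, f ω * μ[μ[χ | m] | m₁] ω ∂μ :=
        (integral_mul_condExp hm₁ hf (hfi.mul_bdd integrable_condExp.aestronglyMeasurable
          hcχ_bound) integrable_condExp).symm
    _ = ∫ ω, f ω * μ[χ | m₁] ω ∂μ := by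
        refine integral_congr_ae ?_
        filter_upwards [condExp_indicator_ae_eq_condExp_condExp_indicator hm₁ hm hB hfact]
          with ω hω
        rw [hω]
    _ = ∫ ω, f ω * χ ω ∂μ :=
        integral_mul_condExp hm₁ hf (hfi.mul_bdd hχ.aestronglyMeasurable hχ_bound) hχ
    _ = ∫ ω in B, f ω ∂μ := (setIntegral_eq_integral_mul_indicator_one hB _).symm

end CondIndep

end MeasureTheory

/-- estimates of conditionally affine quantities are affine in the own
estimate.  Let `V, Y` be integrable real random variables, `G` a sub-σ-algebra, and
`e, f ∈ ℝ`.  If `σ(Y)` and `G` are conditionally independent given `σ(V)` (expressed,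
as in the paper, by the almost-sure factorization of the conditional probability of
intersections of events — hypothesis `hci`), and `E[Y | σ(V)] = e·V + f` a.s., then
`E[Y | G] = e·E[V | G] + f` a.s. -/
theorem condexp_of_conditionally_affine
    {Ω : Type*} [m : MeasurableSpace Ω] (μ : Measure Ω) [IsProbabilityMeasure μ]
    (V Y : Ω → ℝ) (hVm : Measurable V) (hYm : Measurable Y)
    (hVi : Integrable V μ) (hYi : Integrable Y μ)
    (G : MeasurableSpace Ω) (hG : G ≤ m)
    (e f : ℝ)
    (hci : ∀ A B : Set Ω,
      MeasurableSet[MeasurableSpace.comap Y inferInstance] A → MeasurableSet[G] B →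
      μ[(A ∩ B).indicator (fun _ => (1 : ℝ)) | MeasurableSpace.comap V inferInstance]
        =ᵐ[μ] fun ω =>
          (μ[A.indicator (fun _ => (1 : ℝ)) | MeasurableSpace.comap V inferInstance]) ω
            * (μ[B.indicator (fun _ => (1 : ℝ)) | MeasurableSpace.comap V inferInstance]) ω)
    (hYV : μ[Y | MeasurableSpace.comap V inferInstance] =ᵐ[μ] fun ω => e * V ω + f) :
    μ[Y | G] =ᵐ[μ] fun ω => e * (μ[V | G]) ω + f := by
  have hY_sm : StronglyMeasurable[MeasurableSpace.comap Y inferInstance] Y :=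
    (comap_measurable Y).stronglyMeasurable
  calc μ[Y | G] =ᵐ[μ] μ[μ[Y | MeasurableSpace.comap V inferInstance] | G] :=
        condExp_ae_eq_condExp_of_forall_setIntegral_eq hG hYi integrable_condExp fun B hB ↦
          (setIntegral_condExp_of_indicator_condIndep hYm.comap_le hVm.comap_le (hG B hB)
            (fun A hA ↦ hci A B hA hB) hY_sm hYi).symm
    _ =ᵐ[μ] μ[e • V + (fun _ ↦ f) | G] := condExp_congr_ae hYV
    _ =ᵐ[μ] μ[e • V | G] + μ[(fun _ ↦ f) | G] := condExp_add (hVi.smul e) (integrable_const f) G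
    _ =ᵐ[μ] e • μ[V | G] + fun _ ↦ f := by
        rw [condExp_const hG]
        exact (condExp_smul e V G).add (.refl _ _)
end
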